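/- arXiv:2308.04532 — 8 statements merged into one kernel-verified Lean document; each statement's English description precedes it below -/
import Mathlib

section
/- For all a, e ∈ M: if a α e and (a, e) ∈ β ∘ γ ∘ β ∘ γ, then (a, e) ∈ (αβ) ∘ (αγ) ∘ (αβ) ∘ (αγ) ∘ (αβ) ∘ (αγ) ∘ (αβ) ∘ (αγ) (the alternating composition with 8 factors, starting with αβ). Equivalently, α(β∘γ∘β∘γ) ⊆ αβ∘αγ∘αβ∘αγ∘αβ∘αγ∘αβ∘αγ. (Theorem 2.2, stated for an arbitrary algebra in a 4-distributive variety.) -/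
/-- Alternating relational composition with `k` factors, alternating between
`δ` and `ε`, starting with `δ`.  `AltRel δ ε 0` is equality. -/
def AltRel {M : Type*} (δ ε : M → M → Prop) : ℕ → M → M → Prop
  | 0, x, z => x = z
  | k+1, x, z => ∃ y, δ x y ∧ AltRel ε δ k y z

/-- A ternary operation `t` is compatible with the relation `θ`. -/
def Compat {M : Type*} (θ : M → M → Prop) (t : M → M → M → M) : Prop :=
  ∀ x x' y y' z z', θ x x' → θ y y' → θ z z' → θ (t x y z) (t x' y' z')

/-!
Write `a β b γ c β d γ e`. The path from `a` to `e` consists of explicit Jónsson-term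
combinations of `a, b, c, d, e` (`jonssonPath`). Consecutive points are alternately `β`- and
`γ`-related by compatibility combined with the Jónsson identities, and every point is
`α`-related to `a` because its outermost arguments are (as `a α e`) and `tᵢ x y x = x`.
-/

section

variable {M : Type*} {t1 t2 t3 : M → M → M → M}

structure JonssonTerms (t1 t2 t3 : M → M → M → M) : Prop where
  t1_xyx : ∀ x y, t1 x y x = x
  t2_xyx : ∀ x y, t2 x y x = x
  t3_xyx : ∀ x y, t3 x y x = x
  t1_xxz : ∀ x z, t1 x x z = x
  t1_xzz_eq_t2 : ∀ x z, t1 x z z = t2 x z z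
  t2_xxz_eq_t3 : ∀ x z, t2 x x z = t3 x x z
  t3_xzz : ∀ x z, t3 x z z = z

structure IsCongruence (θ : M → M → Prop) (t1 t2 t3 : M → M → M → M) : Prop
    extends Equivalence θ where
  map₁ {x x' y y' z z'} : θ x x' → θ y y' → θ z z' → θ (t1 x y z) (t1 x' y' z')
  map₂ {x x' y y' z z'} : θ x x' → θ y y' → θ z z' → θ (t2 x y z) (t2 x' y' z')
  map₃ {x x' y y' z z'} : θ x x' → θ y y' → θ z z' → θ (t3 x y z) (t3 x' y' z')

namespace IsCongruence

variable {θ : M → M → Prop}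

theorem of_compat (hθ : Equivalence θ) (h₁ : Compat θ t1) (h₂ : Compat θ t2)
    (h₃ : Compat θ t3) : IsCongruence θ t1 t2 t3 :=
  ⟨hθ, h₁ _ _ _ _ _ _, h₂ _ _ _ _ _ _, h₃ _ _ _ _ _ _⟩

variable {a x y z : M}

theorem t1_rel_of_outer (hθ : IsCongruence θ t1 t2 t3) (J : JonssonTerms t1 t2 t3)
    (hx : θ x a) (hz : θ z a) : θ (t1 x y z) a :=
  J.t1_xyx a y ▸ hθ.map₁ hx (hθ.refl y) hz

theorem t2_rel_of_outer (hθ : IsCongruence θ t1 t2 t3) (J : JonssonTerms t1 t2 t3)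
    (hx : θ x a) (hz : θ z a) : θ (t2 x y z) a :=
  J.t2_xyx a y ▸ hθ.map₂ hx (hθ.refl y) hz

theorem t3_rel_of_outer (hθ : IsCongruence θ t1 t2 t3) (J : JonssonTerms t1 t2 t3)
    (hx : θ x a) (hz : θ z a) : θ (t3 x y z) a :=
  J.t3_xyx a y ▸ hθ.map₃ hx (hθ.refl y) hz

end IsCongruence

theorem altRel_of_path {δ ε : M → M → Prop} (u : ℕ → M) (k : ℕ)
    (hδ : ∀ i < k, δ (u (2 * i)) (u (2 * i + 1)))
    (hε : ∀ i < k, ε (u (2 * i + 1)) (u (2 * i + 2))) :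
    AltRel δ ε (2 * k) (u 0) (u (2 * k)) := by
  induction k generalizing u with
  | zero => rfl
  | succ k ih =>
    refine ⟨u 1, hδ 0 k.succ_pos, u 2, hε 0 k.succ_pos, ?_⟩
    exact ih (fun i => u (i + 2)) (fun i hi => hδ (i + 1) (by omega))
      (fun i hi => hε (i + 1) (by omega))

def jonssonPath (t1 t2 t3 : M → M → M → M) (a b c d e : M) : ℕ → M
  | 0 => a
  | 1 => t3 (t1 a e e) b (t1 a b e)
  | 2 => t3 (t2 a d e) (t1 b c c) (t1 a c e)
  | 3 => t3 (t2 a c e) (t2 a c d) (t1 a d e)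
  | 4 => t2 (t2 a b e) (t2 a c e) (t2 a d e)
  | 5 => t1 (t3 a b e) (t2 b c e) (t2 a d e)
  | 6 => t1 (t3 a c e) (t3 b c e) (t1 a e e)
  | 7 => t3 (t3 a c e) (t3 c d e) (t3 a d e)
  | _ => e

variable {α β γ : M → M → Prop} {a b c d e : M}

theorem jonssonPath_rel_start (J : JonssonTerms t1 t2 t3) (hα : IsCongruence α t1 t2 t3)
    (hae : α a e) :
    ∀ i, α (jonssonPath t1 t2 t3 a b c d e i) a := by
  have ha : α a a := hα.refl a
  have he : α e a := hα.symm hae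
  have o₁ {x y z : M} : α x a → α z a → α (t1 x y z) a := hα.t1_rel_of_outer J
  have o₂ {x y z : M} : α x a → α z a → α (t2 x y z) a := hα.t2_rel_of_outer J
  have o₃ {x y z : M} : α x a → α z a → α (t3 x y z) a := hα.t3_rel_of_outer J
  intro i
  match i with
  | 0 => exact ha
  | 1 => exact o₃ (o₁ ha he) (o₁ ha he)
  | 2 => exact o₃ (o₂ ha he) (o₁ ha he)
  | 3 => exact o₃ (o₂ ha he) (o₁ ha he)
  | 4 => exact o₂ (o₂ ha he) (o₂ ha he)
  | 5 => exact o₁ (o₃ ha he) (o₂ ha he)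
  | 6 => exact o₁ (o₃ ha he) (o₁ ha he)
  | 7 => exact o₃ (o₃ ha he) (o₃ ha he)
  | _ + 8 => exact he

theorem jonssonPath_even_step (J : JonssonTerms t1 t2 t3) (hβ : IsCongruence β t1 t2 t3)
    (hab : β a b) (hcd : β c d) :
    ∀ i < 4, β (jonssonPath t1 t2 t3 a b c d e (2 * i))
      (jonssonPath t1 t2 t3 a b c d e (2 * i + 1)) := by
  have : Trans β β β := ⟨hβ.trans⟩
  have r {x : M} : β x x := hβ.refl x
  intro i hi
  interval_cases i <;> simp only [jonssonPath]
  · calc a = t3 (t1 a e e) a (t1 a a e) := by rw [J.t1_xxz, J.t3_xzz]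
      β _ _ := hβ.map₃ r hab (hβ.map₁ r hab r)
  · calc t3 (t2 a d e) (t1 b c c) (t1 a c e) = t3 (t2 a d e) (t2 b c c) (t1 a c e) := by
          rw [J.t1_xzz_eq_t2]
      β _ _ :=
          hβ.map₃ (hβ.map₂ r (hβ.symm hcd) r) (hβ.map₂ (hβ.symm hab) r hcd) (hβ.map₁ r hcd r)
  · calc β (t2 (t2 a b e) (t2 a c e) (t2 a d e)) (t2 (t2 a b e) (t2 a c e) (t2 a c e)) :=
          hβ.map₂ r r (hβ.map₂ r (hβ.symm hcd) r)
      _ = t1 (t2 a b e) (t2 a c e) (t2 a c e) := (J.t1_xzz_eq_t2 _ _).symm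
      β _ (t1 (t2 a a e) (t2 b c e) (t2 a d e)) :=
          hβ.map₁ (hβ.map₂ r (hβ.symm hab) r) (hβ.map₂ hab r r) (hβ.map₂ r hcd r)
      _ = t1 (t3 a a e) (t2 b c e) (t2 a d e) := by rw [J.t2_xxz_eq_t3]
      β _ _ := hβ.map₁ (hβ.map₃ r hab r) r r
  · calc β (t1 (t3 a c e) (t3 b c e) (t1 a e e)) (t1 (t3 a c e) (t3 a c e) (t1 a e e)) :=
          hβ.map₁ r (hβ.map₃ (hβ.symm hab) r r) r
      _ = t3 (t3 a c e) (t3 c c e) (t3 a c e) := by rw [J.t1_xxz, J.t3_xyx]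
      β _ _ := hβ.map₃ r (hβ.map₃ r hcd r) (hβ.map₃ r hcd r)

theorem jonssonPath_odd_step (J : JonssonTerms t1 t2 t3) (hγ : IsCongruence γ t1 t2 t3)
    (hbc : γ b c) (hde : γ d e) :
    ∀ i < 4, γ (jonssonPath t1 t2 t3 a b c d e (2 * i + 1))
      (jonssonPath t1 t2 t3 a b c d e (2 * i + 2)) := by
  have : Trans γ γ γ := ⟨hγ.trans⟩
  have r {x : M} : γ x x := hγ.refl x
  intro i hi
  interval_cases i <;> simp only [jonssonPath]
  · calc t3 (t1 a e e) b (t1 a b e) = t3 (t2 a e e) (t1 b b c) (t1 a b e) := by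
          rw [J.t1_xzz_eq_t2, J.t1_xxz]
      γ _ _ := hγ.map₃ (hγ.map₂ r (hγ.symm hde) r) (hγ.map₁ r hbc r) (hγ.map₁ r hbc r)
  · calc γ (t3 (t2 a c e) (t2 a c d) (t1 a d e)) (t3 (t2 a b e) (t2 a b e) (t1 a e e)) :=
          hγ.map₃ (hγ.map₂ r (hγ.symm hbc) r) (hγ.map₂ r (hγ.symm hbc) hde) (hγ.map₁ r hde r)
      _ = t2 (t2 a b e) (t2 a b e) (t2 a e e) := by rw [J.t2_xxz_eq_t3, J.t1_xzz_eq_t2]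
      γ _ _ := hγ.map₂ r (hγ.map₂ r hbc r) (hγ.map₂ r (hγ.symm hde) r)
  · calc γ (t1 (t3 a b e) (t2 b c e) (t2 a d e)) (t1 (t3 a c e) (t2 b b d) (t2 a e e)) :=
          hγ.map₁ (hγ.map₃ r hbc r) (hγ.map₂ r (hγ.symm hbc) (hγ.symm hde)) (hγ.map₂ r hde r)
      _ = t1 (t3 a c e) (t3 b b d) (t1 a e e) := by rw [J.t2_xxz_eq_t3, J.t1_xzz_eq_t2]
      γ _ _ := hγ.map₁ r (hγ.map₃ r hbc hde) r
  · calc γ (t3 (t3 a c e) (t3 c d e) (t3 a d e)) (t3 (t3 a c e) (t3 b e e) (t3 a e e)) :=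
          hγ.map₃ r (hγ.map₃ (hγ.symm hbc) hde r) (hγ.map₃ r hde r)
      _ = e := by simp only [J.t3_xzz]

end

theorem stmt_2_general
    {M : Type*}
    (t1 t2 t3 : M → M → M → M) (α β γ : M → M → Prop)
    (hJ1 : ∀ x y : M, t1 x y x = x)
    (hJ2 : ∀ x y : M, t2 x y x = x)
    (hJ3 : ∀ x y : M, t3 x y x = x)
    (hJ4 : ∀ x z : M, t1 x x z = x)
    (hJ5 : ∀ x z : M, t1 x z z = t2 x z z)
    (hJ6 : ∀ x z : M, t2 x x z = t3 x x z)
    (hJ7 : ∀ x z : M, t3 x z z = z)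
    (hα : Equivalence α) (hβ : Equivalence β) (hγ : Equivalence γ)
    (hcong : ∀ θ ∈ ({α, β, γ} : Set (M → M → Prop)),
      Compat θ t1 ∧ Compat θ t2 ∧ Compat θ t3)
    (a e : M) (hae : α a e) (h : AltRel β γ 4 a e) :
    AltRel (fun x y => α x y ∧ β x y) (fun x y => α x y ∧ γ x y) 8 a e := by
  obtain ⟨b, hab, c, hbc, d, hcd, e', hde, he⟩ := h
  subst e'
  have J : JonssonTerms t1 t2 t3 := ⟨hJ1, hJ2, hJ3, hJ4, hJ5, hJ6, hJ7⟩
  have isCongr {θ} (hθ : Equivalence θ) (hmem : θ ∈ ({α, β, γ} : Set (M → M → Prop))) :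
      IsCongruence θ t1 t2 t3 :=
    let ⟨h₁, h₂, h₃⟩ := hcong θ hmem
    .of_compat hθ h₁ h₂ h₃
  have hα' := isCongr hα (by simp)
  set u := jonssonPath t1 t2 t3 a b c d e
  have hu : ∀ i, α (u i) (u (i + 1)) := fun i =>
    hα.trans (jonssonPath_rel_start J hα' hae i) (hα.symm (jonssonPath_rel_start J hα' hae (i + 1)))
  exact altRel_of_path u 4
    (fun i hi => ⟨hu _, jonssonPath_even_step J (isCongr hβ (by simp)) hab hcd i hi⟩)
    (fun i hi => ⟨hu _, jonssonPath_odd_step J (isCongr hγ (by simp)) hbc hde i hi⟩)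

theorem stmt_2
    {M : Type*} [Nonempty M]
    (t1 t2 t3 : M → M → M → M) (α β γ : M → M → Prop)
    (hJ1 : ∀ x y : M, t1 x y x = x)
    (hJ2 : ∀ x y : M, t2 x y x = x)
    (hJ3 : ∀ x y : M, t3 x y x = x)
    (hJ4 : ∀ x z : M, t1 x x z = x)
    (hJ5 : ∀ x z : M, t1 x z z = t2 x z z)
    (hJ6 : ∀ x z : M, t2 x x z = t3 x x z)
    (hJ7 : ∀ x z : M, t3 x z z = z)
    (hα : Equivalence α) (hβ : Equivalence β) (hγ : Equivalence γ)
    (hcong : ∀ θ ∈ ({α, β, γ} : Set (M → M → Prop)),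
      Compat θ t1 ∧ Compat θ t2 ∧ Compat θ t3)
    (a e : M) (hae : α a e) (h : AltRel β γ 4 a e) :
    AltRel (fun x y => α x y ∧ β x y) (fun x y => α x y ∧ γ x y) 8 a e :=
  stmt_2_general t1 t2 t3 α β γ hJ1 hJ2 hJ3 hJ4 hJ5 hJ6 hJ7 hα hβ hγ hcong a e hae h
end

section
/- For all a, c, e ∈ M: if a α c, (a, c) ∈ β ∘ γ, c α e and (c, e) ∈ β ∘ γ, then (a, e) ∈ (αβ) ∘ (αγ) ∘ (αβ) ∘ (α ∩ (γ∘β)) ∘ (αγ) ∘ (αβ) ∘ (αγ). Equivalently, α(β∘γ) ∘ α(β∘γ) ⊆ αβ ∘ αγ ∘ αβ ∘ α(γ∘β) ∘ αγ ∘ αβ ∘ αγ. (Theorem 2.3, stated for an arbitrary algebra in a defective 4-Jónsson variety.) -/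
theorem stmt_3
    {M : Type*} [Nonempty M]
    (t1 t2 t3 : M → M → M → M) (α β γ : M → M → Prop)
    (hJ1 : ∀ x y : M, t1 x y x = x)
    (hJ3 : ∀ x y : M, t3 x y x = x)
    (hJ4 : ∀ x z : M, t1 x x z = x)
    (hJ5 : ∀ x z : M, t1 x z z = t2 x z z)
    (hJ6 : ∀ x z : M, t2 x x z = t3 x x z)
    (hJ7 : ∀ x z : M, t3 x z z = z)
    (hα : Equivalence α) (hβ : Equivalence β) (hγ : Equivalence γ)
    (hcong : ∀ θ ∈ ({α, β, γ} : Set (M → M → Prop)),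
      Compat θ t1 ∧ Compat θ t2 ∧ Compat θ t3)
    (a c e : M) (hac : α a c) (h1 : ∃ b, β a b ∧ γ b c)
    (hce : α c e) (h2 : ∃ d, β c d ∧ γ d e) :
    ∃ p1 p2 p3 p4 p5 p6 : M,
      (α a p1 ∧ β a p1) ∧ (α p1 p2 ∧ γ p1 p2) ∧ (α p2 p3 ∧ β p2 p3) ∧
      (α p3 p4 ∧ ∃ r, γ p3 r ∧ β r p4) ∧
      (α p4 p5 ∧ γ p4 p5) ∧ (α p5 p6 ∧ β p5 p6) ∧ (α p6 e ∧ γ p6 e) := by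
  obtain ⟨b, hab, hbc⟩ := h1
  obtain ⟨d, hcd, hde⟩ := h2
  obtain ⟨Aα1, Aα2, Aα3⟩ := hcong α (Set.mem_insert _ _)
  obtain ⟨Bβ1, Bβ2, Bβ3⟩ := hcong β (Set.mem_insert_of_mem _ (Set.mem_insert _ _))
  obtain ⟨Gγ1, Gγ2, Gγ3⟩ :=
    hcong γ (Set.mem_insert_of_mem _ (Set.mem_insert_of_mem _ rfl))
  have hae : α a e := hα.trans hac hce
  have hca : α c a := hα.symm hac
  have hea : α e a := hα.symm hae
  have hec : α e c := hα.symm hce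
  -- the six points
  refine ⟨t3 e b a, t3 e c a, t3 e d (t3 b c a), t2 e c (t1 c a b),
    t2 e c c, t1 e c d, ?_, ?_, ?_, ?_, ?_, ?_, ?_⟩
  · -- α a p1 ∧ β a p1
    constructor
    · have h := Aα3 e a b b a a hea (hα.refl b) (hα.refl a)
      rw [hJ3] at h
      exact hα.symm h
    · have h := Bβ3 e e a b a a (hβ.refl e) hab (hβ.refl a)
      rw [hJ7] at h
      exact h
  · -- p1 → p2
    constructor
    · have h1' := Aα3 e a b b a a hea (hα.refl b) (hα.refl a)
      rw [hJ3] at h1'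
      have h2' := Aα3 e a c c a a hea (hα.refl c) (hα.refl a)
      rw [hJ3] at h2'
      exact hα.trans h1' (hα.symm h2')
    · exact Gγ3 e e b c a a (hγ.refl e) hbc (hγ.refl a)
  · -- p2 → p3
    constructor
    · have h2' := Aα3 e a c c a a hea (hα.refl c) (hα.refl a)
      rw [hJ3] at h2'
      -- α p3 c
      have hin : α (t3 b c a) (t3 b c c) :=
        Aα3 b b c c a c (hα.refl b) (hα.refl c) hac
      rw [hJ7] at hin
      have h3' := Aα3 e c d d (t3 b c a) c hec (hα.refl d) hin
      rw [hJ3] at h3'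
      exact hα.trans h2' (hα.trans hac (hα.symm h3'))
    · have hin : β a (t3 b c a) := by
        have h := Bβ3 a b c c a a hab (hβ.refl c) (hβ.refl a)
        rw [hJ3] at h
        exact h
      exact Bβ3 e e c d a (t3 b c a) (hβ.refl e) hcd hin
  · -- p3 → p4 (composite step)
    have hinα : α (t3 b c a) c := by
      have hin := Aα3 b b c c a c (hα.refl b) (hα.refl c) hac
      rw [hJ7] at hin
      exact hin
    have hp3c : α (t3 e d (t3 b c a)) c := by
      have h := Aα3 e c d d (t3 b c a) c hec (hα.refl d) hinα
      rw [hJ3] at h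
      exact h
    have hp4c : α (t2 e c (t1 c a b)) c := by
      have hin : α (t1 c a b) a := by
        have h := Aα1 c a a a b b hca (hα.refl a) (hα.refl b)
        rw [hJ4] at h
        exact h
      have h := Aα2 e e c c (t1 c a b) c (hα.refl e) (hα.refl c) (hα.trans hin hac)
      -- h : α (t2 e c (t1 c a b)) (t2 e c c)
      have h5 : α (t2 e c c) c := by
        have h' := Aα1 e c c c c c hec (hα.refl c) (hα.refl c)
        rw [hJ1] at h'
        rw [hJ5] at h'
        exact h'
      exact hα.trans h h5
    constructor
    · exact hα.trans hp3c (hα.symm hp4c)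
    · refine ⟨t2 e d (t2 c b a), ?_, ?_⟩
      · -- γ p3 r
        have s1 : γ (t3 e d (t3 b c a)) (t3 e e (t3 c c a)) :=
          Gγ3 e e d e (t3 b c a) (t3 c c a) (hγ.refl e) hde
            (Gγ3 b c c c a a hbc (hγ.refl c) (hγ.refl a))
        rw [← hJ6, ← hJ6] at s1
        have s2 : γ (t2 e e (t2 c c a)) (t2 e d (t2 c b a)) :=
          Gγ2 e e e d (t2 c c a) (t2 c b a) (hγ.refl e) (hγ.symm hde)
            (Gγ2 c c c b a a (hγ.refl c) (hγ.symm hbc) (hγ.refl a))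
        exact hγ.trans s1 s2
      · -- β r p4
        have s1 : β (t2 e d (t2 c b a)) (t2 e c (t2 c a a)) :=
          Bβ2 e e d c (t2 c b a) (t2 c a a) (hβ.refl e) (hβ.symm hcd)
            (Bβ2 c c b a a a (hβ.refl c) (hβ.symm hab) (hβ.refl a))
        rw [← hJ5] at s1
        have s2 : β (t2 e c (t1 c a a)) (t2 e c (t1 c a b)) :=
          Bβ2 e e c c (t1 c a a) (t1 c a b) (hβ.refl e) (hβ.refl c)
            (Bβ1 c c a a a b (hβ.refl c) (hβ.refl a) hab)
        exact hβ.trans s1 s2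
  · -- p4 → p5
    constructor
    · have hin : α (t1 c a b) c := by
        have h := Aα1 c a a a b b hca (hα.refl a) (hα.refl b)
        rw [hJ4] at h
        exact hα.trans h hac
      exact Aα2 e e c c (t1 c a b) c (hα.refl e) (hα.refl c) hin
    · have hin : γ (t1 c a b) c := by
        have h := Gγ1 c c a a b c (hγ.refl c) (hγ.refl a) hbc
        rw [hJ1] at h
        exact h
      exact Gγ2 e e c c (t1 c a b) c (hγ.refl e) (hγ.refl c) hin
  · -- p5 → p6
    constructor
    · have h5 : α (t2 e c c) c := by
        have h' := Aα1 e c c c c c hec (hα.refl c) (hα.refl c)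
        rw [hJ1] at h'
        rw [hJ5] at h'
        exact h'
      have h6 : α (t1 e c d) e := by
        have h := Aα1 e e c e d d (hα.refl e) hce (hα.refl d)
        rw [hJ4] at h
        exact h
      exact hα.trans h5 (hα.trans hce (hα.symm h6))
    · have h := Bβ1 e e c c c d (hβ.refl e) (hβ.refl c) hcd
      rw [hJ5] at h
      exact h
  · -- p6 → e
    constructor
    · have h := Aα1 e e c e d d (hα.refl e) hce (hα.refl d)
      rw [hJ4] at h
      exact h
    · have h := Gγ1 e e c c d e (hγ.refl e) (hγ.refl c) hde
      rw [hJ1] at h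
      exact h
end

section
/- Let n ≥ 2 be even, let a = b0, b1, …, bn = c be elements of M with b0 β b1 γ b2 β b3 … γ bn (consecutive elements alternately β- and γ-related, starting with β) and a α c. Then there exists an n-(n−2)-n chain; indeed the elements Ai = t1(a, bi, c) (with A0 = a), Bj = t2(a, b(n−1−j), c) for 0 ≤ j ≤ n−2, and Ci = t3(a, bi, c) (with Cn = c) form such a chain. (Base case of the proof of Lemma 3.1.) -/
/-- An `n`-`ℓ`-`n` chain from `a` to `c`, encoded as a function `D : ℕ → M` whose
relevant values are the `2*n + ℓ + 1` elements
`A₀,…,A_{n-1}, B₀,…,B_ℓ, C₁,…,C_n` (so `B j = D (n + j)`):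
consecutive elements are alternately `β`- and `γ`-related starting with `β`,
(C1) every element is `α`-related to `a`, and
(C2) for every `j ≤ ℓ`, both `(a, B j)` and `(B j, c)` belong to the
alternating composition of `β` and `γ` with `n` factors starting with `β`. -/
def IsNLNChain {M : Type*} (α β γ : M → M → Prop) (n ℓ : ℕ) (a c : M)
    (D : ℕ → M) : Prop :=
  D 0 = a ∧ D (2*n + ℓ) = c ∧
  (∀ i < 2*n + ℓ, if Even i then β (D i) (D (i+1)) else γ (D i) (D (i+1))) ∧
  (∀ i ≤ 2*n + ℓ, α a (D i)) ∧
  (∀ j ≤ ℓ, AltRel β γ n a (D (n + j)) ∧ AltRel β γ n (D (n + j)) c)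

section

variable {M : Type*}

namespace Compat

variable {θ : M → M → Prop} {t : M → M → M → M}

theorem rel_left (h : Compat θ t) (hθ : ∀ x, θ x x) (y z : M) {x x' : M} (hx : θ x x') :
    θ (t x y z) (t x' y z) :=
  h _ _ _ _ _ _ hx (hθ y) (hθ z)

theorem rel_middle (h : Compat θ t) (hθ : ∀ x, θ x x) (x z : M) {y y' : M} (hy : θ y y') :
    θ (t x y z) (t x y' z) :=
  h _ _ _ _ _ _ (hθ x) hy (hθ z)

theorem rel_right (h : Compat θ t) (hθ : ∀ x, θ x x) (x y : M) {z z' : M} (hz : θ z z') :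
    θ (t x y z) (t x y z') :=
  h _ _ _ _ _ _ (hθ x) (hθ y) hz

end Compat

structure IsCongruence_s5 (θ : M → M → Prop) (t1 t2 t3 : M → M → M → M) : Prop where
  equiv : Equivalence θ
  compat1 : Compat θ t1
  compat2 : Compat θ t2
  compat3 : Compat θ t3

def AltStep (δ ε : M → M → Prop) (i : ℕ) (x y : M) : Prop :=
  if Even i then δ x y else ε x y

section AltStep

variable {N : Type*} {δ ε : M → M → Prop} {i j : ℕ} {x y : M}

theorem altStep_zero : AltStep δ ε 0 x y ↔ δ x y := by
  simp [AltStep]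

theorem altStep_one : AltStep δ ε 1 x y ↔ ε x y := by
  simp [AltStep]

theorem altStep_succ : AltStep δ ε (i + 1) x y ↔ AltStep ε δ i x y := by
  by_cases h : Even i <;> simp [AltStep, Nat.even_add_one, h]

theorem altStep_congr (h : i % 2 = j % 2) : AltStep δ ε i x y ↔ AltStep δ ε j x y := by
  simp only [AltStep, Nat.even_iff, h]

theorem AltStep.map {δ' ε' : N → N → Prop} {φ : M → N}
    (hδ : ∀ {x y}, δ x y → δ' (φ x) (φ y)) (hε : ∀ {x y}, ε x y → ε' (φ x) (φ y))
    (h : AltStep δ ε i x y) : AltStep δ' ε' i (φ x) (φ y) := by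
  unfold AltStep at *
  split_ifs at * <;> simp_all

theorem AltStep.symm (hδ : ∀ {x y}, δ x y → δ y x) (hε : ∀ {x y}, ε x y → ε y x)
    (h : AltStep δ ε i x y) : AltStep δ ε i y x :=
  h.map (φ := id) hδ hε

theorem altRel_of_altStep {n : ℕ} {f : ℕ → M} (h : ∀ i < n, AltStep δ ε i (f i) (f (i + 1))) :
    AltRel δ ε n (f 0) (f n) := by
  induction n generalizing δ ε f with
  | zero => rfl
  | succ n ih =>
    refine ⟨f 1, altStep_zero.mp (h 0 n.succ_pos), ih (f := fun i => f (i + 1)) fun i hi => ?_⟩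
    exact altStep_succ.mp (h (i + 1) (by omega))

end AltStep

section Jonsson

variable {t t1 t2 t3 : M → M → M → M} {θ δ ε : M → M → Prop} {n : ℕ} {a c : M} {b : ℕ → M}

theorem rel_apply_of_rel (ht : Compat θ t) (hθ : Equivalence θ)
    (hJ : ∀ x y, t x y x = x) (hac : θ a c) (y : M) : θ a (t a y c) := by
  simpa only [hJ] using ht.rel_right hθ.refl a y hac

theorem rel_t1_t2 (h1 : Compat θ t1) (h2 : Compat θ t2) (hθ : Equivalence θ)
    (hJ5 : ∀ x z, t1 x z z = t2 x z z) (a : M) {x z : M} (hxz : θ x z) :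
    θ (t1 a x z) (t2 a x z) :=
  hθ.trans (hJ5 a z ▸ h1.rel_middle hθ.refl a z hxz) (h2.rel_middle hθ.refl a z (hθ.symm hxz))

theorem rel_t2_t3 (h2 : Compat θ t2) (h3 : Compat θ t3) (hθ : Equivalence θ)
    (hJ6 : ∀ x z, t2 x x z = t3 x x z) {a x : M} (c : M) (hax : θ a x) :
    θ (t2 a x c) (t3 a x c) :=
  hθ.trans (hJ6 a c ▸ h2.rel_middle hθ.refl a c (hθ.symm hax)) (h3.rel_middle hθ.refl a c hax)

theorem altRel_apply_left (hδ : Compat δ t) (hε : Compat ε t) (hδr : ∀ x, δ x x)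
    (hεr : ∀ x, ε x x) (hJ : ∀ x y, t x y x = x) (hb0 : b 0 = a) (hbn : b n = c)
    (hb : ∀ i < n, AltStep δ ε i (b i) (b (i + 1))) (x : M) :
    AltRel δ ε n a (t a x c) := by
  have := altRel_of_altStep (f := fun i => t a x (b i)) fun i hi =>
    (hb i hi).map (φ := t a x) (hδ.rel_right hδr a x) (hε.rel_right hεr a x)
  simpa only [hb0, hbn, hJ] using this

theorem altRel_apply_right (hδ : Compat δ t) (hε : Compat ε t) (hδr : ∀ x, δ x x)
    (hεr : ∀ x, ε x x) (hJ : ∀ x y, t x y x = x) (hb0 : b 0 = a) (hbn : b n = c)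
    (hb : ∀ i < n, AltStep δ ε i (b i) (b (i + 1))) (x : M) :
    AltRel δ ε n (t a x c) c := by
  have := altRel_of_altStep (f := fun i => t (b i) x c) fun i hi =>
    (hb i hi).map (φ := fun y => t y x c) (hδ.rel_left hδr x c) (hε.rel_left hεr x c)
  simpa only [hb0, hbn, hJ] using this

theorem AltStep.apply_middle {β γ : M → M → Prop} (hβ : Compat β t) (hγ : Compat γ t)
    (hβr : ∀ x, β x x) (hγr : ∀ x, γ x x) (a c : M) {i : ℕ} {x y : M}
    (h : AltStep β γ i x y) : AltStep β γ i (t a x c) (t a y c) :=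
  h.map (φ := fun y => t a y c) (hβ.rel_middle hβr a c) (hγ.rel_middle hγr a c)

def jonssonChain (t1 t2 t3 : M → M → M → M) (n : ℕ) (a c : M) (b : ℕ → M) (i : ℕ) : M :=
  if i < n then t1 a (b i) c
  else if i ≤ 2*n - 2 then t2 a (b (n - 1 - (i - n))) c
  else t3 a (b (i - (2*n - 2))) c

theorem jonssonChain_eq_t1 {i : ℕ} (h : i < n) :
    jonssonChain t1 t2 t3 n a c b i = t1 a (b i) c :=
  if_pos h

theorem jonssonChain_eq_t2 {i : ℕ} (h1 : n ≤ i) (h2 : i ≤ 2*n - 2) :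
    jonssonChain t1 t2 t3 n a c b i = t2 a (b (n - 1 - (i - n))) c := by
  rw [jonssonChain, if_neg (by omega), if_pos h2]

theorem jonssonChain_eq_t3 {i : ℕ} (hn : 1 ≤ n) (h : 2*n - 2 < i) :
    jonssonChain t1 t2 t3 n a c b i = t3 a (b (i - (2*n - 2))) c := by
  rw [jonssonChain, if_neg (by omega), if_neg (by omega)]

theorem jonssonChain_altStep_of_lt {β γ : M → M → Prop} (hβ : IsCongruence_s5 β t1 t2 t3)
    (hγ : IsCongruence_s5 γ t1 t2 t3) (hJ5 : ∀ x z, t1 x z z = t2 x z z) (hn : 2 ≤ n)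
    (hne : Even n) (hbn : b n = c) (hb : ∀ i < n, AltStep β γ i (b i) (b (i + 1))) {i : ℕ}
    (hi : i < n) :
    AltStep β γ i (jonssonChain t1 t2 t3 n a c b i) (jonssonChain t1 t2 t3 n a c b (i + 1)) := by
  have hn2 : n % 2 = 0 := Nat.even_iff.mp hne
  rw [jonssonChain_eq_t1 hi]
  rcases lt_or_ge (i + 1) n with h | h
  · rw [jonssonChain_eq_t1 h]
    exact (hb i hi).apply_middle hβ.compat1 hγ.compat1 hβ.equiv.refl hγ.equiv.refl a c
  have hγb : γ (b i) c := by
    have := hb i hi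
    rwa [altStep_congr (show i % 2 = 1 % 2 by omega), altStep_one,
      show i + 1 = n by omega, hbn] at this
  rw [jonssonChain_eq_t2 (i := i + 1) h (by omega), show n - 1 - (i + 1 - n) = i by omega,
    altStep_congr (show i % 2 = 1 % 2 by omega), altStep_one]
  exact rel_t1_t2 hγ.compat1 hγ.compat2 hγ.equiv hJ5 a hγb

theorem jonssonChain_altStep_of_ge {β γ : M → M → Prop} (hβ : IsCongruence_s5 β t1 t2 t3)
    (hγ : IsCongruence_s5 γ t1 t2 t3) (hJ6 : ∀ x z, t2 x x z = t3 x x z) (hn : 2 ≤ n)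
    (hne : Even n) (hb0 : b 0 = a) (hb : ∀ i < n, AltStep β γ i (b i) (b (i + 1))) {i : ℕ}
    (hni : n ≤ i) (hi : i < 2*n + (n - 2)) :
    AltStep β γ i (jonssonChain t1 t2 t3 n a c b i) (jonssonChain t1 t2 t3 n a c b (i + 1)) := by
  have hn2 : n % 2 = 0 := Nat.even_iff.mp hne
  have hβr := hβ.equiv.refl
  have hγr := hγ.equiv.refl
  rcases lt_or_ge (i + 1) (2*n - 1) with h | h
  · rw [jonssonChain_eq_t2 hni (by omega), jonssonChain_eq_t2 (i := i + 1) (by omega) (by omega),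
      show n - 1 - (i - n) = 2*n - 2 - i + 1 by omega,
      show n - 1 - (i + 1 - n) = 2*n - 2 - i by omega,
      altStep_congr (show i % 2 = (2*n - 2 - i) % 2 by omega)]
    exact ((hb _ (by omega)).symm hβ.equiv.symm hγ.equiv.symm).apply_middle
      hβ.compat2 hγ.compat2 hβr hγr a c
  rw [jonssonChain_eq_t3 (i := i + 1) (by omega) (by omega)]
  rcases h.eq_or_lt with h | h
  · have hβb : β a (b 1) := by simpa only [altStep_zero, hb0] using hb 0 (by omega)
    rw [jonssonChain_eq_t2 hni (by omega), show n - 1 - (i - n) = 1 by omega,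
      show i + 1 - (2*n - 2) = 1 by omega, altStep_congr (show i % 2 = 0 % 2 by omega),
      altStep_zero]
    exact rel_t2_t3 hβ.compat2 hβ.compat3 hβ.equiv hJ6 c hβb
  rw [jonssonChain_eq_t3 (by omega) (by omega),
    show i + 1 - (2*n - 2) = i - (2*n - 2) + 1 by omega,
    altStep_congr (show i % 2 = (i - (2*n - 2)) % 2 by omega)]
  exact (hb _ (by omega)).apply_middle hβ.compat3 hγ.compat3 hβr hγr a c

theorem rel_jonssonChain (hθ : IsCongruence_s5 θ t1 t2 t3) (hJ1 : ∀ x y, t1 x y x = x)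
    (hJ2 : ∀ x y, t2 x y x = x) (hJ3 : ∀ x y, t3 x y x = x) (hac : θ a c) (i : ℕ) :
    θ a (jonssonChain t1 t2 t3 n a c b i) := by
  unfold jonssonChain
  split_ifs
  · exact rel_apply_of_rel hθ.compat1 hθ.equiv hJ1 hac _
  · exact rel_apply_of_rel hθ.compat2 hθ.equiv hJ2 hac _
  · exact rel_apply_of_rel hθ.compat3 hθ.equiv hJ3 hac _

end Jonsson

end

theorem stmt_5_general
    {M : Type*}
    (t1 t2 t3 : M → M → M → M) (α β γ : M → M → Prop)
    (hJ1 : ∀ x y : M, t1 x y x = x)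
    (hJ2 : ∀ x y : M, t2 x y x = x)
    (hJ3 : ∀ x y : M, t3 x y x = x)
    (hJ4 : ∀ x z : M, t1 x x z = x)
    (hJ5 : ∀ x z : M, t1 x z z = t2 x z z)
    (hJ6 : ∀ x z : M, t2 x x z = t3 x x z)
    (hJ7 : ∀ x z : M, t3 x z z = z)
    (hα : Equivalence α) (hβ : Equivalence β) (hγ : Equivalence γ)
    (hcong : ∀ θ ∈ ({α, β, γ} : Set (M → M → Prop)),
      Compat θ t1 ∧ Compat θ t2 ∧ Compat θ t3)
    (n : ℕ) (hn : 2 ≤ n) (hne : Even n) (a c : M) (b : ℕ → M)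
    (hb0 : b 0 = a) (hbn : b n = c)
    (hbalt : ∀ i < n, if Even i then β (b i) (b (i+1)) else γ (b i) (b (i+1)))
    (hac : α a c) :
    IsNLNChain α β γ n (n - 2) a c
      (fun i =>
        if i < n then t1 a (b i) c
        else if i ≤ 2*n - 2 then t2 a (b (n - 1 - (i - n))) c
        else t3 a (b (i - (2*n - 2))) c) := by
  have isCongruence {θ} (hθ : Equivalence θ) (hmem : θ ∈ ({α, β, γ} : Set (M → M → Prop))) :
      IsCongruence_s5 θ t1 t2 t3 :=
    ⟨hθ, (hcong θ hmem).1, (hcong θ hmem).2.1, (hcong θ hmem).2.2⟩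
  have hαc := isCongruence hα (by simp)
  have hβc := isCongruence hβ (by simp)
  have hγc := isCongruence hγ (by simp)
  change IsNLNChain α β γ n (n - 2) a c (jonssonChain t1 t2 t3 n a c b)
  refine ⟨?_, ?_, fun i hi => ?_, fun i _ => rel_jonssonChain hαc hJ1 hJ2 hJ3 hac i,
    fun j hj => ?_⟩
  · rw [jonssonChain_eq_t1 (by omega), hb0, hJ4]
  · rw [jonssonChain_eq_t3 (by omega) (by omega), show 2*n + (n - 2) - (2*n - 2) = n by omega,
      hbn, hJ7]
  · rcases lt_or_ge i n with hin | hni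
    · exact jonssonChain_altStep_of_lt hβc hγc hJ5 hn hne hbn hbalt hin
    · exact jonssonChain_altStep_of_ge hβc hγc hJ6 hn hne hb0 hbalt hni hi
  · rw [jonssonChain_eq_t2 (by omega) (by omega)]
    exact ⟨altRel_apply_left hβc.compat2 hγc.compat2 hβ.refl hγ.refl hJ2 hb0 hbn hbalt _,
      altRel_apply_right hβc.compat2 hγc.compat2 hβ.refl hγ.refl hJ2 hb0 hbn hbalt _⟩

theorem stmt_5
    {M : Type*} [Nonempty M]
    (t1 t2 t3 : M → M → M → M) (α β γ : M → M → Prop)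
    (hJ1 : ∀ x y : M, t1 x y x = x)
    (hJ2 : ∀ x y : M, t2 x y x = x)
    (hJ3 : ∀ x y : M, t3 x y x = x)
    (hJ4 : ∀ x z : M, t1 x x z = x)
    (hJ5 : ∀ x z : M, t1 x z z = t2 x z z)
    (hJ6 : ∀ x z : M, t2 x x z = t3 x x z)
    (hJ7 : ∀ x z : M, t3 x z z = z)
    (hα : Equivalence α) (hβ : Equivalence β) (hγ : Equivalence γ)
    (hcong : ∀ θ ∈ ({α, β, γ} : Set (M → M → Prop)),
      Compat θ t1 ∧ Compat θ t2 ∧ Compat θ t3)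
    (n : ℕ) (hn : 2 ≤ n) (hne : Even n) (a c : M) (b : ℕ → M)
    (hb0 : b 0 = a) (hbn : b n = c)
    (hbalt : ∀ i < n, if Even i then β (b i) (b (i+1)) else γ (b i) (b (i+1)))
    (hac : α a c) :
    IsNLNChain α β γ n (n - 2) a c
      (fun i =>
        if i < n then t1 a (b i) c
        else if i ≤ 2*n - 2 then t2 a (b (n - 1 - (i - n))) c
        else t3 a (b (i - (2*n - 2))) c) :=
  stmt_5_general t1 t2 t3 α β γ hJ1 hJ2 hJ3 hJ4 hJ5 hJ6 hJ7 hα hβ hγ hcong n hn hne a c b hb0 hbn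
    hbalt hac
end

section
/- Let n ≥ 2 be even, let a = b0, b1, …, bn = c be elements of M with b0 β b1 γ b2 β b3 … γ bn (consecutive elements alternately β- and γ-related, starting with β) and a α c. If ℓ ≥ 2 is even and there exists an n-ℓ-n chain, then there exists an n-(ℓ−2)-n chain. (Inductive step of the proof of Lemma 3.1.) -/
lemma altRel_exists_chain {M : Type*} :
    ∀ (k : ℕ) (δ ε : M → M → Prop) (x y : M), AltRel δ ε k x y →
    ∃ f : ℕ → M, f 0 = x ∧ f k = y ∧
      ∀ i < k, if Even i then δ (f i) (f (i+1)) else ε (f i) (f (i+1)) := by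
  intro k
  induction k with
  | zero =>
      intro δ ε x y h
      exact ⟨fun _ => x, rfl, h, fun i hi => absurd hi (by omega)⟩
  | succ k ih =>
      intro δ ε x y h
      obtain ⟨y₀, hxy, hrest⟩ := h
      obtain ⟨f, hf0, hfk, hfe⟩ := ih ε δ y₀ y hrest
      refine ⟨fun i => match i with | 0 => x | j+1 => f j, rfl, hfk, ?_⟩
      intro i hi
      match i with
      | 0 =>
          rw [if_pos (by simp : Even 0)]
          show δ x (f 0)
          rw [hf0]; exact hxy
      | (j+1) =>
          have h' := hfe j (by omega)
          show if Even (j+1) then δ (f j) (f (j+1)) else ε (f j) (f (j+1))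
          by_cases hE : Even j
          · rw [if_pos hE] at h'
            rw [if_neg (by simp [Nat.even_add_one, hE])]
            exact h'
          · rw [if_neg hE] at h'
            rw [if_pos (Nat.even_add_one.mpr hE)]
            exact h'

lemma altrel_congr {M : Type*} (t : M → M → M → M) :
    ∀ (k : ℕ) (δ ε : M → M → Prop), Compat δ t → Compat ε t →
    ∀ x x' y y' z z', AltRel δ ε k x x' → AltRel δ ε k y y' → AltRel δ ε k z z' →
    AltRel δ ε k (t x y z) (t x' y' z') := by
  intro k
  induction k with
  | zero =>
      intro δ ε _ _ x x' y y' z z' hx hy hz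
      show t x y z = t x' y' z'
      rw [show x = x' from hx, show y = y' from hy, show z = z' from hz]
  | succ k ih =>
      rintro δ ε hδ hε x x' y y' z z' ⟨x₁, hx1, hx2⟩ ⟨y₁, hy1, hy2⟩ ⟨z₁, hz1, hz2⟩
      exact ⟨t x₁ y₁ z₁, hδ _ _ _ _ _ _ hx1 hy1 hz1,
        ih ε δ hε hδ _ _ _ _ _ _ hx2 hy2 hz2⟩

lemma mkIf {M : Type*} {β γ : M → M → Prop} (i : ℕ) (x y : M)
    (h0 : i % 2 = 0 → β x y) (h1 : i % 2 = 1 → γ x y) :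
    if Even i then β x y else γ x y := by
  by_cases hE : Even i
  · rw [if_pos hE]; exact h0 (Nat.even_iff.mp hE)
  · rw [if_neg hE]
    apply h1
    have h2 : ¬ i % 2 = 0 := fun hc => hE (Nat.even_iff.mpr hc)
    omega

/-- The new chain in the case `ℓ ≥ 4`. -/
def EGen {M : Type*} (t1 t2 t3 : M → M → M → M) (D p q : ℕ → M) (n ℓ : ℕ) :
    ℕ → M := fun i =>
  if i < n then t1 (D i) (p i) (D (i+2))
  else if i = n then t1 (D n) (D (n+2)) (D (n+2))
  else if i ≤ n+2 then t2 (D i) (D (n+2)) (D (i+2))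
  else if i < n+ℓ-2 then t3 (D i) (D i) (D (i+2))
  else t3 (D i) (q (i - (n+ℓ-2))) (D (i+2))

/-- The new chain in the case `ℓ = 2`. -/
def ETwo {M : Type*} (t1 t2 t3 : M → M → M → M) (D p q : ℕ → M) (n : ℕ) :
    ℕ → M := fun i =>
  if i < n then t1 (D i) (p i) (D (n+2))
  else if i = n then t2 (D n) (D (n+1)) (D (n+2))
  else t3 (D i) (q (i-n)) (D (i+2))

theorem stmt_6
    {M : Type*} [Nonempty M]
    (t1 t2 t3 : M → M → M → M) (α β γ : M → M → Prop)
    (hJ1 : ∀ x y : M, t1 x y x = x)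
    (hJ2 : ∀ x y : M, t2 x y x = x)
    (hJ3 : ∀ x y : M, t3 x y x = x)
    (hJ4 : ∀ x z : M, t1 x x z = x)
    (hJ5 : ∀ x z : M, t1 x z z = t2 x z z)
    (hJ6 : ∀ x z : M, t2 x x z = t3 x x z)
    (hJ7 : ∀ x z : M, t3 x z z = z)
    (hα : Equivalence α) (hβ : Equivalence β) (hγ : Equivalence γ)
    (hcong : ∀ θ ∈ ({α, β, γ} : Set (M → M → Prop)),
      Compat θ t1 ∧ Compat θ t2 ∧ Compat θ t3)
    (n : ℕ) (hn : 2 ≤ n) (hne : Even n) (a c : M) (b : ℕ → M)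
    (hb0 : b 0 = a) (hbn : b n = c)
    (hbalt : ∀ i < n, if Even i then β (b i) (b (i+1)) else γ (b i) (b (i+1)))
    (hac : α a c)
    (ℓ : ℕ) (hℓ : 2 ≤ ℓ) (hℓe : Even ℓ)
    (hchain : ∃ D : ℕ → M, IsNLNChain α β γ n ℓ a c D) :
    ∃ D : ℕ → M, IsNLNChain α β γ n (ℓ - 2) a c D := by
  classical
  obtain ⟨D, hD0, hDm, hDalt, hDa, hDC2⟩ := hchain
  have memα : α ∈ ({α, β, γ} : Set (M → M → Prop)) := Set.mem_insert _ _
  have memβ : β ∈ ({α, β, γ} : Set (M → M → Prop)) :=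
    Set.mem_insert_of_mem _ (Set.mem_insert _ _)
  have memγ : γ ∈ ({α, β, γ} : Set (M → M → Prop)) :=
    Set.mem_insert_of_mem _ (Set.mem_insert_of_mem _ rfl)
  obtain ⟨ca1, ca2, ca3⟩ := hcong α memα
  obtain ⟨cb1, cb2, cb3⟩ := hcong β memβ
  obtain ⟨cg1, cg2, cg3⟩ := hcong γ memγ
  have hn2 : n % 2 = 0 := Nat.even_iff.mp hne
  have hl2' : ℓ % 2 = 0 := Nat.even_iff.mp hℓe
  have Db : ∀ i, i % 2 = 0 → i < 2*n+ℓ → β (D i) (D (i+1)) := by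
    intro i h2 hi
    have h := hDalt i hi
    rwa [if_pos (Nat.even_iff.mpr h2)] at h
  have Dg : ∀ i, i % 2 = 1 → i < 2*n+ℓ → γ (D i) (D (i+1)) := by
    intro i h2 hi
    have h := hDalt i hi
    rwa [if_neg (fun hc : Even i => by have := Nat.even_iff.mp hc; omega)] at h
  have Dα : ∀ i j, i ≤ 2*n+ℓ → j ≤ 2*n+ℓ → α (D i) (D j) :=
    fun i j hi hj => hα.trans (hα.symm (hDa i hi)) (hDa j hj)
  have mkC2 : ∀ (t : M → M → M → M), Compat β t → Compat γ t →
      (∀ x y : M, t x y x = x) →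
      ∀ j1 j2 j3, j1 ≤ ℓ → j2 ≤ ℓ → j3 ≤ ℓ →
      AltRel β γ n a (t (D (n+j1)) (D (n+j2)) (D (n+j3))) ∧
      AltRel β γ n (t (D (n+j1)) (D (n+j2)) (D (n+j3))) c := by
    intro t cbt cgt hid j1 j2 j3 h1 h2 h3
    constructor
    · have h := altrel_congr t n β γ cbt cgt a (D (n+j1)) a (D (n+j2)) a (D (n+j3))
        (hDC2 j1 h1).1 (hDC2 j2 h2).1 (hDC2 j3 h3).1
      rwa [hid a a] at h
    · have h := altrel_congr t n β γ cbt cgt (D (n+j1)) c (D (n+j2)) c (D (n+j3)) c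
        (hDC2 j1 h1).2 (hDC2 j2 h2).2 (hDC2 j3 h3).2
      rwa [hid c c] at h
  by_cases hcase : ℓ = 2
  · -- ℓ = 2
    subst hcase
    obtain ⟨p, hp0, hpn, hpe⟩ := altRel_exists_chain n β γ a (D (n+1)) (hDC2 1 (by omega)).1
    obtain ⟨q, hq0, hqn, hqe⟩ := altRel_exists_chain n β γ (D (n+1)) c (hDC2 1 (by omega)).2
    have pb : ∀ i, i % 2 = 0 → i < n → β (p i) (p (i+1)) := by
      intro i h2 hi
      have h := hpe i hi
      rwa [if_pos (Nat.even_iff.mpr h2)] at h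
    have pg : ∀ i, i % 2 = 1 → i < n → γ (p i) (p (i+1)) := by
      intro i h2 hi
      have h := hpe i hi
      rwa [if_neg (fun hc : Even i => by have := Nat.even_iff.mp hc; omega)] at h
    have qb : ∀ i, i % 2 = 0 → i < n → β (q i) (q (i+1)) := by
      intro i h2 hi
      have h := hqe i hi
      rwa [if_pos (Nat.even_iff.mpr h2)] at h
    have qg : ∀ i, i % 2 = 1 → i < n → γ (q i) (q (i+1)) := by
      intro i h2 hi
      have h := hqe i hi
      rwa [if_neg (fun hc : Even i => by have := Nat.even_iff.mp hc; omega)] at h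
    have hEa : ∀ i, i < n → ETwo t1 t2 t3 D p q n i = t1 (D i) (p i) (D (n+2)) := by
      intro i hi
      simp only [ETwo, if_pos hi]
    have hEb : ETwo t1 t2 t3 D p q n n = t2 (D n) (D (n+1)) (D (n+2)) := by
      simp [ETwo]
    have hEc : ∀ i, n < i → ETwo t1 t2 t3 D p q n i = t3 (D i) (q (i-n)) (D (i+2)) := by
      intro i hi
      simp only [ETwo, if_neg (show ¬ i < n by omega), if_neg (show ¬ i = n by omega)]
    refine ⟨ETwo t1 t2 t3 D p q n, ?_, ?_, ?_, ?_, ?_⟩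
    · rw [hEa 0 (by omega), hD0, hp0, hJ4]
    · rw [show 2*n + (2-2) = 2*n by omega, hEc (2*n) (by omega),
        show 2*n - n = n by omega, hqn, hDm, hJ7]
    · intro i hi
      have hi' : i < 2*n := by omega
      by_cases h1 : i + 1 < n
      · rw [hEa i (by omega), hEa (i+1) h1]
        apply mkIf
        · intro h2
          exact cb1 _ _ _ _ _ _ (Db i h2 (by omega)) (pb i h2 (by omega)) (hβ.refl _)
        · intro h2
          exact cg1 _ _ _ _ _ _ (Dg i h2 (by omega)) (pg i h2 (by omega)) (hγ.refl _)
      · by_cases h2 : i + 1 = n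
        · -- i = n-1, odd
          have hipar : i % 2 = 1 := by omega
          rw [hEa i (by omega), h2, hEb,
            if_neg (fun hc : Even i => by have := Nat.even_iff.mp hc; omega)]
          have s1 : γ (t1 (D i) (p i) (D (n+2))) (t1 (D n) (D (n+2)) (D (n+2))) := by
            refine cg1 _ _ _ _ _ _ ?_ ?_ (hγ.refl _)
            · have h := Dg i hipar (by omega); rwa [h2] at h
            · have h := pg i hipar (by omega)
              rw [h2, hpn] at h
              exact hγ.trans h (Dg (n+1) (by omega) (by omega))
          rw [hJ5] at s1
          refine hγ.trans s1 ?_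
          exact cg2 _ _ _ _ _ _ (hγ.refl _)
            (hγ.symm (Dg (n+1) (by omega) (by omega))) (hγ.refl _)
        · by_cases h3 : i = n
          · -- i = n, even
            rw [h3, hEb, hEc (n+1) (by omega), show n+1-n = 1 by omega,
              show n+1+2 = n+3 by omega, if_pos (Nat.even_iff.mpr hn2)]
            have s1 : β (t2 (D n) (D (n+1)) (D (n+2)))
                (t2 (D (n+1)) (D (n+1)) (D (n+3))) :=
              cb2 _ _ _ _ _ _ (Db n hn2 (by omega)) (hβ.refl _)
                (Db (n+2) (by omega) (by omega))
            rw [hJ6] at s1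
            refine hβ.trans s1 ?_
            refine cb3 _ _ _ _ _ _ (hβ.refl _) ?_ (hβ.refl _)
            have h := qb 0 (by omega) (by omega)
            rwa [hq0] at h
          · -- i > n
            have h4 : n < i := by omega
            rw [hEc i h4, hEc (i+1) (by omega), show i+1-n = (i-n)+1 by omega,
              show i+1+2 = (i+2)+1 by omega]
            apply mkIf
            · intro hp2
              exact cb3 _ _ _ _ _ _ (Db i hp2 (by omega))
                (qb (i-n) (by omega) (by omega)) (Db (i+2) (by omega) (by omega))
            · intro hp2
              exact cg3 _ _ _ _ _ _ (Dg i hp2 (by omega))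
                (qg (i-n) (by omega) (by omega)) (Dg (i+2) (by omega) (by omega))
    · intro i hi
      have hi' : i ≤ 2*n := by omega
      by_cases h1 : i < n
      · rw [hEa i h1]
        have h := ca1 (D i) (D i) (p i) (p i) (D i) (D (n+2)) (hα.refl _) (hα.refl _)
          (Dα i (n+2) (by omega) (by omega))
        rw [hJ1] at h
        exact hα.trans (hDa i (by omega)) h
      · by_cases h2 : i = n
        · rw [h2, hEb]
          have h := ca2 (D n) (D n) (D (n+1)) (D (n+1)) (D n) (D (n+2)) (hα.refl _)
            (hα.refl _) (Dα n (n+2) (by omega) (by omega))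
          rw [hJ2] at h
          exact hα.trans (hDa n (by omega)) h
        · have h4 : n < i := by omega
          rw [hEc i h4]
          have h := ca3 (D i) (D i) (q (i-n)) (q (i-n)) (D i) (D (i+2)) (hα.refl _)
            (hα.refl _) (Dα i (i+2) (by omega) (by omega))
          rw [hJ3] at h
          exact hα.trans (hDa i (by omega)) h
    · intro j hj
      have hj0 : j = 0 := by omega
      subst hj0
      rw [show n + 0 = n by omega, hEb]
      have h := mkC2 t2 cb2 cg2 hJ2 0 1 2 (by omega) (by omega) (by omega)
      rwa [show n + 0 = n by omega] at h
  · -- ℓ ≥ 4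
    have hl4 : 4 ≤ ℓ := by omega
    obtain ⟨p, hp0, hpn, hpe⟩ := altRel_exists_chain n β γ a (D (n+2)) (hDC2 2 (by omega)).1
    obtain ⟨q, hq0, hqn, hqe⟩ :=
      altRel_exists_chain n β γ (D (n+(ℓ-2))) c (hDC2 (ℓ-2) (by omega)).2
    rw [show n+(ℓ-2) = n+ℓ-2 by omega] at hq0
    have pb : ∀ i, i % 2 = 0 → i < n → β (p i) (p (i+1)) := by
      intro i h2 hi
      have h := hpe i hi
      rwa [if_pos (Nat.even_iff.mpr h2)] at h
    have pg : ∀ i, i % 2 = 1 → i < n → γ (p i) (p (i+1)) := by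
      intro i h2 hi
      have h := hpe i hi
      rwa [if_neg (fun hc : Even i => by have := Nat.even_iff.mp hc; omega)] at h
    have qb : ∀ i, i % 2 = 0 → i < n → β (q i) (q (i+1)) := by
      intro i h2 hi
      have h := hqe i hi
      rwa [if_pos (Nat.even_iff.mpr h2)] at h
    have qg : ∀ i, i % 2 = 1 → i < n → γ (q i) (q (i+1)) := by
      intro i h2 hi
      have h := hqe i hi
      rwa [if_neg (fun hc : Even i => by have := Nat.even_iff.mp hc; omega)] at h
    have hEt1 : ∀ i, i ≤ n → EGen t1 t2 t3 D p q n ℓ i = t1 (D i) (p i) (D (i+2)) := by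
      intro i hi
      rcases eq_or_lt_of_le hi with heq | hlt
      · rw [heq]
        simp [EGen, hpn]
      · simp only [EGen, if_pos hlt]
    have hEt2 : ∀ i, n ≤ i → i ≤ n+2 →
        EGen t1 t2 t3 D p q n ℓ i = t2 (D i) (D (n+2)) (D (i+2)) := by
      intro i h1 h2
      rcases eq_or_lt_of_le h1 with heq | hlt
      · rw [← heq]
        have hv : EGen t1 t2 t3 D p q n ℓ n = t1 (D n) (D (n+2)) (D (n+2)) := by
          simp [EGen]
        rw [hv]
        exact hJ5 _ _
      · simp only [EGen, if_neg (show ¬ i < n by omega), if_neg (show ¬ i = n by omega),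
          if_pos h2]
    have hEt3a : ∀ i, n+2 ≤ i → i < n+ℓ-2 →
        EGen t1 t2 t3 D p q n ℓ i = t3 (D i) (D i) (D (i+2)) := by
      intro i h1 h2
      rcases eq_or_lt_of_le h1 with heq | hlt
      · rw [← heq]
        simp only [EGen, if_neg (show ¬ n+2 < n by omega),
          if_neg (show ¬ n+2 = n by omega), if_pos (le_refl (n+2))]
        rw [show n+2+2 = n+4 by omega]
        exact hJ6 _ _
      · simp only [EGen, if_neg (show ¬ i < n by omega), if_neg (show ¬ i = n by omega),
          if_neg (show ¬ i ≤ n+2 by omega), if_pos h2]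
    have hEt3b : ∀ i, n+ℓ-2 ≤ i →
        EGen t1 t2 t3 D p q n ℓ i = t3 (D i) (q (i - (n+ℓ-2))) (D (i+2)) := by
      intro i h1
      by_cases h2 : i ≤ n+2
      · have hi : i = n+2 := by omega
        have hl4' : n+ℓ-2 = n+2 := by omega
        subst hi
        simp only [EGen, if_neg (show ¬ n+2 < n by omega),
          if_neg (show ¬ n+2 = n by omega), if_pos (le_refl (n+2))]
        rw [hl4', show n+2-(n+2) = 0 by omega, hq0, hl4', show n+2+2 = n+4 by omega]
        exact hJ6 _ _
      · simp only [EGen, if_neg (show ¬ i < n by omega), if_neg (show ¬ i = n by omega),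
          if_neg h2, if_neg (show ¬ i < n+ℓ-2 by omega)]
    refine ⟨EGen t1 t2 t3 D p q n ℓ, ?_, ?_, ?_, ?_, ?_⟩
    · rw [hEt1 0 (by omega), hD0, hp0, hJ4]
    · rw [show 2*n + (ℓ-2) = 2*n+ℓ-2 by omega, hEt3b (2*n+ℓ-2) (by omega),
        show 2*n+ℓ-2 - (n+ℓ-2) = n by omega, hqn,
        show 2*n+ℓ-2+2 = 2*n+ℓ by omega, hDm, hJ7]
    · intro i hi
      have hi' : i < 2*n+ℓ-2 := by omega
      by_cases h1 : i < n
      · rw [hEt1 i (by omega), hEt1 (i+1) (by omega), show i+1+2 = (i+2)+1 by omega]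
        apply mkIf
        · intro h2
          exact cb1 _ _ _ _ _ _ (Db i h2 (by omega)) (pb i h2 (by omega))
            (Db (i+2) (by omega) (by omega))
        · intro h2
          exact cg1 _ _ _ _ _ _ (Dg i h2 (by omega)) (pg i h2 (by omega))
            (Dg (i+2) (by omega) (by omega))
      · by_cases h2 : i ≤ n+1
        · rw [hEt2 i (by omega) (by omega), hEt2 (i+1) (by omega) (by omega),
            show i+1+2 = (i+2)+1 by omega]
          apply mkIf
          · intro h3
            exact cb2 _ _ _ _ _ _ (Db i h3 (by omega)) (hβ.refl _)
              (Db (i+2) (by omega) (by omega))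
          · intro h3
            exact cg2 _ _ _ _ _ _ (Dg i h3 (by omega)) (hγ.refl _)
              (Dg (i+2) (by omega) (by omega))
        · -- n+2 ≤ i
          have h4 : n+2 ≤ i := by omega
          by_cases h5 : i+1 < n+ℓ-2
          · rw [hEt3a i h4 (by omega), hEt3a (i+1) (by omega) h5,
              show i+1+2 = (i+2)+1 by omega]
            apply mkIf
            · intro h6
              exact cb3 _ _ _ _ _ _ (Db i h6 (by omega)) (Db i h6 (by omega))
                (Db (i+2) (by omega) (by omega))
            · intro h6
              exact cg3 _ _ _ _ _ _ (Dg i h6 (by omega)) (Dg i h6 (by omega))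
                (Dg (i+2) (by omega) (by omega))
          · by_cases h6 : i < n+ℓ-2
            · -- i+1 = n+ℓ-2
              have h7 : i+1 = n+ℓ-2 := by omega
              rw [hEt3a i h4 h6, hEt3b (i+1) (by omega),
                show i+1 - (n+ℓ-2) = 0 by omega, hq0, ← h7,
                show i+1+2 = (i+2)+1 by omega]
              apply mkIf
              · intro h8
                exact cb3 _ _ _ _ _ _ (Db i h8 (by omega)) (Db i h8 (by omega))
                  (Db (i+2) (by omega) (by omega))
              · intro h8
                exact cg3 _ _ _ _ _ _ (Dg i h8 (by omega)) (Dg i h8 (by omega))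
                  (Dg (i+2) (by omega) (by omega))
            · -- n+ℓ-2 ≤ i
              have h7 : n+ℓ-2 ≤ i := by omega
              rw [hEt3b i h7, hEt3b (i+1) (by omega),
                show i+1 - (n+ℓ-2) = (i - (n+ℓ-2))+1 by omega,
                show i+1+2 = (i+2)+1 by omega]
              apply mkIf
              · intro h8
                exact cb3 _ _ _ _ _ _ (Db i h8 (by omega))
                  (qb (i - (n+ℓ-2)) (by omega) (by omega))
                  (Db (i+2) (by omega) (by omega))
              · intro h8
                exact cg3 _ _ _ _ _ _ (Dg i h8 (by omega))
                  (qg (i - (n+ℓ-2)) (by omega) (by omega))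
                  (Dg (i+2) (by omega) (by omega))
    · intro i hi
      have hi' : i ≤ 2*n+ℓ-2 := by omega
      by_cases h1 : i ≤ n
      · rw [hEt1 i h1]
        have h := ca1 (D i) (D i) (p i) (p i) (D i) (D (i+2)) (hα.refl _) (hα.refl _)
          (Dα i (i+2) (by omega) (by omega))
        rw [hJ1] at h
        exact hα.trans (hDa i (by omega)) h
      · by_cases h2 : i ≤ n+2
        · rw [hEt2 i (by omega) h2]
          have h := ca2 (D i) (D i) (D (n+2)) (D (n+2)) (D i) (D (i+2)) (hα.refl _)
            (hα.refl _) (Dα i (i+2) (by omega) (by omega))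
          rw [hJ2] at h
          exact hα.trans (hDa i (by omega)) h
        · by_cases h3 : i < n+ℓ-2
          · rw [hEt3a i (by omega) h3]
            have h := ca3 (D i) (D i) (D i) (D i) (D i) (D (i+2)) (hα.refl _)
              (hα.refl _) (Dα i (i+2) (by omega) (by omega))
            rw [hJ3] at h
            exact hα.trans (hDa i (by omega)) h
          · rw [hEt3b i (by omega)]
            have h := ca3 (D i) (D i) (q (i - (n+ℓ-2))) (q (i - (n+ℓ-2))) (D i)
              (D (i+2)) (hα.refl _) (hα.refl _) (Dα i (i+2) (by omega) (by omega))
            rw [hJ3] at h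
            exact hα.trans (hDa i (by omega)) h
    · intro j hj
      by_cases h1 : j = 0
      · subst h1
        rw [show n + 0 = n by omega, hEt2 n (le_refl n) (by omega)]
        have h := mkC2 t2 cb2 cg2 hJ2 0 2 2 (by omega) (by omega) (by omega)
        rwa [show n + 0 = n by omega] at h
      · by_cases h2 : j ≤ 2
        · rw [hEt2 (n+j) (by omega) (by omega), show n+j+2 = n+(j+2) by omega]
          exact mkC2 t2 cb2 cg2 hJ2 j 2 (j+2) (by omega) (by omega) (by omega)
        · by_cases h3 : j < ℓ-2
          · rw [hEt3a (n+j) (by omega) (by omega), show n+j+2 = n+(j+2) by omega]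
            exact mkC2 t3 cb3 cg3 hJ3 j j (j+2) (by omega) (by omega) (by omega)
          · have h4 : j = ℓ-2 := by omega
            rw [hEt3b (n+j) (by omega), show n+j - (n+ℓ-2) = 0 by omega, hq0,
              show n+ℓ-2 = n+j by omega, show n+j+2 = n+(j+2) by omega]
            exact mkC2 t3 cb3 cg3 hJ3 j j (j+2) (by omega) (by omega) (by omega)
end

section
/- Let n ≥ 3 be odd, let a = b0, b1, …, bn = c be elements of M with b0 β b1 γ b2 β b3 … β bn (consecutive elements alternately β- and γ-related, starting and ending with β) and a α c. If ℓ ≥ 3 is odd and there exists an n-ℓ-n chain, then there exists an n-(ℓ−2)-n chain. (Inductive step of the odd case in the proof of Theorem 1.1, identity (1.4).) -/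
private lemma altRel_of_fun {M : Type*} (k : ℕ) :
    ∀ (β γ : M → M → Prop) (w : ℕ → M),
    (∀ i < k, if Even i then β (w i) (w (i+1)) else γ (w i) (w (i+1))) →
    AltRel β γ k (w 0) (w k) := by
  induction k with
  | zero => intro β γ w _; exact rfl
  | succ k ih =>
    intro β γ w h
    refine ⟨w 1, ?_, ?_⟩
    · have h0 := h 0 (by omega)
      simpa using h0
    · exact ih γ β (fun i => w (i+1)) (by
        intro i hi
        have h2 := h (i+1) (by omega)
        by_cases he : Even i
        · rw [if_pos he]
          rwa [if_neg (by rw [Nat.even_add_one]; exact not_not_intro he)] at h2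
        · rw [if_neg he]
          rwa [if_pos (Nat.even_add_one.mpr he)] at h2)

private lemma fun_of_altRel {M : Type*} (k : ℕ) :
    ∀ (β γ : M → M → Prop) (x z : M), AltRel β γ k x z →
    ∃ w : ℕ → M, w 0 = x ∧ w k = z ∧
      ∀ i < k, if Even i then β (w i) (w (i+1)) else γ (w i) (w (i+1)) := by
  induction k with
  | zero =>
    intro β γ x z h
    have hxz : x = z := h
    exact ⟨fun _ => x, rfl, hxz, by intro i hi; exact absurd hi (by omega)⟩
  | succ k ih =>
    intro β γ x z h
    obtain ⟨y, hxy, hrest⟩ := h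
    obtain ⟨w', h0, hk, hstep⟩ := ih γ β y z hrest
    refine ⟨fun i => match i with | 0 => x | (j+1) => w' j, rfl, hk, ?_⟩
    intro i hi
    cases i with
    | zero =>
      show if Even 0 then β x (w' 0) else γ x (w' 0)
      rw [if_pos (Even.zero), h0]
      exact hxy
    | succ j =>
      show if Even (j+1) then β (w' j) (w' (j+1)) else γ (w' j) (w' (j+1))
      have h2 := hstep j (by omega)
      by_cases he : Even j
      · rw [if_neg (by rw [Nat.even_add_one]; exact not_not_intro he)]
        rwa [if_pos he] at h2
      · rw [if_pos (Nat.even_add_one.mpr he)]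
        rwa [if_neg he] at h2

theorem stmt_8
    {M : Type*} [Nonempty M]
    (t1 t2 t3 : M → M → M → M) (α β γ : M → M → Prop)
    (hJ1 : ∀ x y : M, t1 x y x = x)
    (hJ2 : ∀ x y : M, t2 x y x = x)
    (hJ3 : ∀ x y : M, t3 x y x = x)
    (hJ4 : ∀ x z : M, t1 x x z = x)
    (hJ5 : ∀ x z : M, t1 x z z = t2 x z z)
    (hJ6 : ∀ x z : M, t2 x x z = t3 x x z)
    (hJ7 : ∀ x z : M, t3 x z z = z)
    (hα : Equivalence α) (hβ : Equivalence β) (hγ : Equivalence γ)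
    (hcong : ∀ θ ∈ ({α, β, γ} : Set (M → M → Prop)),
      Compat θ t1 ∧ Compat θ t2 ∧ Compat θ t3)
    (n : ℕ) (hn : 3 ≤ n) (hno : Odd n) (a c : M) (b : ℕ → M)
    (hb0 : b 0 = a) (hbn : b n = c)
    (hbalt : ∀ i < n, if Even i then β (b i) (b (i+1)) else γ (b i) (b (i+1)))
    (hac : α a c)
    (ℓ : ℕ) (hℓ : 3 ≤ ℓ) (hℓo : Odd ℓ)
    (hchain : ∃ D : ℕ → M, IsNLNChain α β γ n ℓ a c D) :
    ∃ D : ℕ → M, IsNLNChain α β γ n (ℓ - 2) a c D := by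
  obtain ⟨m, rfl⟩ : ∃ m, ℓ = m + 2 := ⟨ℓ - 2, by omega⟩
  obtain ⟨D, hD0, hDc, hDalt, hDgood, hDC2⟩ := hchain
  have hca := hcong α (by simp)
  have hcb := hcong β (by simp)
  have hcg := hcong γ (by simp)
  have hn1 : n % 2 = 1 := Nat.odd_iff.mp hno
  have hm2 : m % 2 = 1 := by have := Nat.odd_iff.mp hℓo; omega
  have hm1 : 1 ≤ m := by omega
  -- witnesses from (C2)
  obtain ⟨w2, hw20, hw2n, hw2s⟩ := fun_of_altRel n β γ _ _ (hDC2 2 (by omega)).1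
  obtain ⟨v, hv0, hvn, hvs⟩ := fun_of_altRel n β γ _ _ (hDC2 m (by omega)).2
  -- helpers for the alternating relation
  have hrefl : ∀ (i : ℕ) (x : M), (if Even i then β x x else γ x x) := by
    intro i x
    by_cases he : Even i
    · rw [if_pos he]; exact hβ.refl x
    · rw [if_neg he]; exact hγ.refl x
  have hsymm : ∀ (i : ℕ) {x y : M},
      (if Even i then β x y else γ x y) → (if Even i then β y x else γ y x) := by
    intro i x y h
    by_cases he : Even i
    · rw [if_pos he] at h ⊢; exact hβ.symm h
    · rw [if_neg he] at h ⊢; exact hγ.symm h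
  have htrans : ∀ (i : ℕ) {x y z : M},
      (if Even i then β x y else γ x y) → (if Even i then β y z else γ y z) →
      (if Even i then β x z else γ x z) := by
    intro i x y z h1 h2
    by_cases he : Even i
    · rw [if_pos he] at h1 h2 ⊢; exact hβ.trans h1 h2
    · rw [if_neg he] at h1 h2 ⊢; exact hγ.trans h1 h2
  have hshift : ∀ (i k : ℕ) (x y : M), i % 2 = k % 2 →
      (if Even k then β x y else γ x y) → (if Even i then β x y else γ x y) := by
    intro i k x y hp h
    by_cases he : Even i
    · rw [if_pos he]
      rwa [if_pos (by rw [Nat.even_iff] at he ⊢; omega)] at h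
    · rw [if_neg he]
      rwa [if_neg (fun hk => he (by rw [Nat.even_iff] at hk ⊢; omega))] at h
  have hcomp1 : ∀ (i : ℕ) (x x' y y' z z' : M),
      (if Even i then β x x' else γ x x') →
      (if Even i then β y y' else γ y y') →
      (if Even i then β z z' else γ z z') →
      (if Even i then β (t1 x y z) (t1 x' y' z') else γ (t1 x y z) (t1 x' y' z')) := by
    intro i x x' y y' z z' h1 h2 h3
    by_cases he : Even i
    · rw [if_pos he] at h1 h2 h3 ⊢; exact hcb.1 _ _ _ _ _ _ h1 h2 h3
    · rw [if_neg he] at h1 h2 h3 ⊢; exact hcg.1 _ _ _ _ _ _ h1 h2 h3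
  have hcomp2 : ∀ (i : ℕ) (x x' y y' z z' : M),
      (if Even i then β x x' else γ x x') →
      (if Even i then β y y' else γ y y') →
      (if Even i then β z z' else γ z z') →
      (if Even i then β (t2 x y z) (t2 x' y' z') else γ (t2 x y z) (t2 x' y' z')) := by
    intro i x x' y y' z z' h1 h2 h3
    by_cases he : Even i
    · rw [if_pos he] at h1 h2 h3 ⊢; exact hcb.2.1 _ _ _ _ _ _ h1 h2 h3
    · rw [if_neg he] at h1 h2 h3 ⊢; exact hcg.2.1 _ _ _ _ _ _ h1 h2 h3
  have hcomp3 : ∀ (i : ℕ) (x x' y y' z z' : M),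
      (if Even i then β x x' else γ x x') →
      (if Even i then β y y' else γ y y') →
      (if Even i then β z z' else γ z z') →
      (if Even i then β (t3 x y z) (t3 x' y' z') else γ (t3 x y z) (t3 x' y' z')) := by
    intro i x x' y y' z z' h1 h2 h3
    by_cases he : Even i
    · rw [if_pos he] at h1 h2 h3 ⊢; exact hcb.2.2 _ _ _ _ _ _ h1 h2 h3
    · rw [if_neg he] at h1 h2 h3 ⊢; exact hcg.2.2 _ _ _ _ _ _ h1 h2 h3
  have hSD : ∀ (i k : ℕ), k + 1 ≤ 2*n + (m+2) → i % 2 = k % 2 →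
      (if Even i then β (D k) (D (k+1)) else γ (D k) (D (k+1))) := by
    intro i k hk hp
    exact hshift i k _ _ hp (hDalt k (by omega))
  have hSw2 : ∀ (i k : ℕ), k < n → i % 2 = k % 2 →
      (if Even i then β (w2 k) (w2 (k+1)) else γ (w2 k) (w2 (k+1))) := by
    intro i k hk hp
    exact hshift i k _ _ hp (hw2s k hk)
  have hSv : ∀ (i k : ℕ), k < n → i % 2 = k % 2 →
      (if Even i then β (v k) (v (k+1)) else γ (v k) (v (k+1))) := by
    intro i k hk hp
    exact hshift i k _ _ hp (hvs k hk)
  -- the new chain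
  set E : ℕ → M := fun i =>
    if i < n then t1 (D i) (D (i+2)) (w2 i)
    else if i ≤ n + m then t2 (D i) (D (n + min (i - n + 2) (m+1))) (D (i+2))
    else if i < 2*n + m then t3 (D (2*n + 2*m + 1 - i)) (v (i - (n+m))) (D (i+2))
    else c with hEdef
  have Ehead : ∀ i, i < n → E i = t1 (D i) (D (i+2)) (w2 i) := by
    intro i h
    simp only [hEdef]
    rw [if_pos h]
  have Emid : ∀ j, j ≤ m → E (n+j) = t2 (D (n+j)) (D (n + min (j+2) (m+1))) (D (n+j+2)) := by
    intro j h
    simp only [hEdef]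
    rw [if_neg (by omega), if_pos (by omega),
      show n + j - n + 2 = j + 2 from by omega]
  have Etail : ∀ s, 1 ≤ s → s ≤ n - 1 →
      E (n+m+s) = t3 (D (n+m+1-s)) (v s) (D (n+m+s+2)) := by
    intro s h1 h2
    simp only [hEdef]
    rw [if_neg (by omega), if_neg (by omega), if_pos (by omega),
      show 2*n + 2*m + 1 - (n+m+s) = n+m+1-s from by omega,
      show n+m+s - (n+m) = s from by omega]
  have Eend : ∀ i, 2*n + m ≤ i → E i = c := by
    intro i h
    simp only [hEdef]
    rw [if_neg (by omega), if_neg (by omega), if_neg (by omega)]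
  rw [show m + 2 - 2 = m from by omega]
  refine ⟨E, ?_⟩
  unfold IsNLNChain
  refine ⟨?_, ?_, ?_, ?_, ?_⟩
  · -- E 0 = a
    rw [Ehead 0 (by omega), hD0, hw20]
    exact hJ1 a (D (0+2))
  · -- E (2n+m) = c
    exact Eend (2*n+m) le_rfl
  · -- the alternating steps
    intro i hi
    by_cases hA : i + 1 < n
    · rw [Ehead i (by omega), Ehead (i+1) hA]
      exact hcomp1 i _ _ _ _ _ _ (hSD i i (by omega) rfl)
        (hSD i (i+2) (by omega) (by omega)) (hSw2 i i (by omega) rfl)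
    · by_cases hB : i + 1 = n
      · -- head-to-middle junction (uses hJ5)
        rw [Ehead i (by omega)]
        have h0 := Emid 0 (by omega)
        rw [min_eq_left (show (0:ℕ)+2 ≤ m+1 from by omega)] at h0
        have hEn : E (i+1) = t2 (D (i+1)) (D (i+1+2)) (D (i+1+2)) := by
          rw [hB]
          exact h0
        have hw2n' : w2 (i+1) = D (i+1+2) := by
          rw [hB]
          exact hw2n
        rw [hEn, ← hJ5 (D (i+1)) (D (i+1+2))]
        refine hcomp1 i _ _ _ _ _ _ (hSD i i (by omega) rfl)
          (hSD i (i+2) (by omega) (by omega)) ?_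
        have h1 := hSw2 i i (by omega) rfl
        rwa [hw2n'] at h1
      · by_cases hC : i < n + m
        · -- middle-middle
          obtain ⟨j, rfl⟩ : ∃ j, i = n + j := ⟨i - n, by omega⟩
          have hj1 : j + 1 ≤ m := by omega
          have e1 := Emid j (by omega)
          have e2 : E (n+j+1) = t2 (D (n+j+1)) (D (n + min (j+1+2) (m+1))) (D (n+j+1+2)) :=
            Emid (j+1) hj1
          rw [e1, e2]
          refine hcomp2 (n+j) _ _ _ _ _ _ (hSD (n+j) (n+j) (by omega) rfl) ?_
            (hSD (n+j) (n+j+2) (by omega) (by omega))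
          by_cases hj2 : j + 1 < m
          · rw [min_eq_left (show j+2 ≤ m+1 from by omega),
              min_eq_left (show j+1+2 ≤ m+1 from by omega)]
            exact hSD (n+j) (n+j+2) (by omega) (by omega)
          · rw [min_eq_left (show j+2 ≤ m+1 from by omega),
              min_eq_right (show m+1 ≤ j+1+2 from by omega),
              show j+2 = m+1 from by omega]
            exact hrefl (n+j) _
        · by_cases hD' : i = n + m
          · -- middle-to-tail junction (uses hJ6)
            subst hD'
            have e1 : E (n+m) = t2 (D (n+m)) (D (n+(m+1))) (D (n+m+2)) := by
              have h0 := Emid m le_rfl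
              rwa [min_eq_right (show m+1 ≤ m+2 from by omega)] at h0
            have e2 : E (n+m+1) = t3 (D (n+m)) (v 1) (D (n+m+1+2)) := by
              have h0 := Etail 1 le_rfl (by omega)
              rwa [show n+m+1-1 = n+m from by omega] at h0
            rw [e1, e2]
            have s1 := hcomp2 (n+m) (D (n+m)) (D (n+m+1)) (D (n+(m+1))) (D (n+m+1))
              (D (n+m+2)) (D (n+m+1+2))
              (hSD (n+m) (n+m) (by omega) rfl) (hrefl (n+m) _)
              (hSD (n+m) (n+m+2) (by omega) (by omega))
            rw [hJ6 (D (n+m+1)) (D (n+m+1+2))] at s1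
            have s2 : if Even (n+m) then
                β (t3 (D (n+m+1)) (D (n+m+1)) (D (n+m+1+2))) (t3 (D (n+m)) (v 1) (D (n+m+1+2)))
                else γ (t3 (D (n+m+1)) (D (n+m+1)) (D (n+m+1+2)))
                  (t3 (D (n+m)) (v 1) (D (n+m+1+2))) := by
              refine hcomp3 (n+m) _ _ _ _ _ _ (hsymm (n+m) (hSD (n+m) (n+m) (by omega) rfl)) ?_
                (hrefl (n+m) _)
              refine htrans (n+m) (hsymm (n+m) (hSD (n+m) (n+m) (by omega) rfl)) ?_
              have h1 := hSv (n+m) 0 (by omega) (by omega)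
              rwa [hv0] at h1
            exact htrans (n+m) s1 s2
          · -- tail
            obtain ⟨s, rfl⟩ : ∃ s, i = n + m + s := ⟨i - (n+m), by omega⟩
            have hs1 : 1 ≤ s := by omega
            by_cases hE' : s ≤ n - 2
            · have e1 : E (n+m+s) = t3 (D (n+m+1-s)) (v s) (D (n+m+s+2)) :=
                Etail s hs1 (by omega)
              have e2 : E (n+m+s+1) = t3 (D (n+m-s)) (v (s+1)) (D (n+m+s+1+2)) := by
                have h0 := Etail (s+1) (by omega) (by omega)
                rwa [show n+m+1-(s+1) = n+m-s from by omega] at h0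
              rw [e1, e2]
              refine hcomp3 (n+m+s) _ _ _ _ _ _ ?_
                (hSv (n+m+s) s (by omega) (by omega))
                (hSD (n+m+s) (n+m+s+2) (by omega) (by omega))
              have h1 := hSD (n+m+s) (n+m-s) (by omega) (by omega)
              rw [show n+m-s+1 = n+m+1-s from by omega] at h1
              exact hsymm (n+m+s) h1
            · -- last step (uses hJ7)
              have hsn : s = n - 1 := by omega
              subst hsn
              have e1 : E (n+m+(n-1)) = t3 (D (m+2)) (v (n-1)) (D (2*n+m+1)) := by
                have h0 := Etail (n-1) (by omega) le_rfl
                rwa [show n+m+1-(n-1) = m+2 from by omega,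
                  show n+m+(n-1)+2 = 2*n+m+1 from by omega] at h0
              have e2 : E (n+m+(n-1)+1) = c := Eend _ (by omega)
              rw [e1, e2, show c = t3 (D (m+2)) c c from (hJ7 (D (m+2)) c).symm]
              refine hcomp3 (n+m+(n-1)) _ _ _ _ _ _ (hrefl _ _) ?_ ?_
              · have h1 := hSv (n+m+(n-1)) (n-1) (by omega) (by omega)
                rw [show n-1+1 = n from by omega, hvn] at h1
                exact h1
              · have h1 := hSD (n+m+(n-1)) (2*n+m+1) (by omega) (by omega)
                rw [show 2*n+m+1+1 = 2*n+(m+2) from by omega, hDc] at h1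
                exact h1
  · -- (C1) every element is α-related to a
    intro i hi
    by_cases h1 : i < n
    · rw [Ehead i h1]
      have hmid : α (D i) (D (i+2)) :=
        hα.trans (hα.symm (hDgood i (by omega))) (hDgood (i+2) (by omega))
      have h2 := hca.1 (D i) (D i) (D i) (D (i+2)) (w2 i) (w2 i)
        (hα.refl _) hmid (hα.refl _)
      rw [hJ4 (D i) (w2 i)] at h2
      exact hα.trans (hDgood i (by omega)) h2
    · by_cases h2 : i ≤ n + m
      · obtain ⟨j, rfl⟩ : ∃ j, i = n + j := ⟨i - n, by omega⟩
        rw [Emid j (by omega)]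
        have hmid : α (D (n+j)) (D (n+j+2)) :=
          hα.trans (hα.symm (hDgood _ (by omega))) (hDgood _ (by omega))
        have h3 := hca.2.1 (D (n+j)) (D (n+j)) (D (n + min (j+2) (m+1)))
          (D (n + min (j+2) (m+1))) (D (n+j)) (D (n+j+2))
          (hα.refl _) (hα.refl _) hmid
        rw [hJ2 (D (n+j)) (D (n + min (j+2) (m+1)))] at h3
        exact hα.trans (hDgood _ (by omega)) h3
      · by_cases h3 : i < 2*n + m
        · obtain ⟨s, rfl⟩ : ∃ s, i = n + m + s := ⟨i - (n+m), by omega⟩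
          rw [Etail s (by omega) (by omega)]
          have hmid : α (D (n+m+1-s)) (D (n+m+s+2)) :=
            hα.trans (hα.symm (hDgood _ (by omega))) (hDgood _ (by omega))
          have h4 := hca.2.2 (D (n+m+1-s)) (D (n+m+1-s)) (v s) (v s)
            (D (n+m+1-s)) (D (n+m+s+2))
            (hα.refl _) (hα.refl _) hmid
          rw [hJ3 (D (n+m+1-s)) (v s)] at h4
          exact hα.trans (hDgood _ (by omega)) h4
        · rw [Eend i (by omega)]
          exact hac
  · -- (C2) for the new chain
    intro j hj
    obtain ⟨f1, hf10, hf1n, hf1s⟩ := fun_of_altRel n β γ _ _ (hDC2 j (by omega)).1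
    obtain ⟨f2, hf20, hf2n, hf2s⟩ :=
      fun_of_altRel n β γ _ _ (hDC2 (min (j+2) (m+1)) (by omega)).1
    obtain ⟨f3, hf30, hf3n, hf3s⟩ := fun_of_altRel n β γ _ _ (hDC2 (j+2) (by omega)).1
    obtain ⟨g1, hg10, hg1n, hg1s⟩ := fun_of_altRel n β γ _ _ (hDC2 j (by omega)).2
    obtain ⟨g2, hg20, hg2n, hg2s⟩ :=
      fun_of_altRel n β γ _ _ (hDC2 (min (j+2) (m+1)) (by omega)).2
    obtain ⟨g3, hg30, hg3n, hg3s⟩ := fun_of_altRel n β γ _ _ (hDC2 (j+2) (by omega)).2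
    constructor
    · have key : AltRel β γ n (t2 (f1 0) (f2 0) (f3 0)) (t2 (f1 n) (f2 n) (f3 n)) := by
        refine altRel_of_fun n β γ (fun x => t2 (f1 x) (f2 x) (f3 x)) ?_
        intro x hx
        have s1 := hf1s x hx; have s2 := hf2s x hx; have s3 := hf3s x hx
        by_cases he : Even x
        · rw [if_pos he] at s1 s2 s3
          show if Even x then _ else _
          rw [if_pos he]
          exact hcb.2.1 _ _ _ _ _ _ s1 s2 s3
        · rw [if_neg he] at s1 s2 s3
          show if Even x then _ else _
          rw [if_neg he]
          exact hcg.2.1 _ _ _ _ _ _ s1 s2 s3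
      rw [hf10, hf20, hf30, hf1n, hf2n, hf3n, hJ2 a a] at key
      rw [Emid j hj]
      exact key
    · have key : AltRel β γ n (t2 (g1 0) (g2 0) (g3 0)) (t2 (g1 n) (g2 n) (g3 n)) := by
        refine altRel_of_fun n β γ (fun x => t2 (g1 x) (g2 x) (g3 x)) ?_
        intro x hx
        have s1 := hg1s x hx; have s2 := hg2s x hx; have s3 := hg3s x hx
        by_cases he : Even x
        · rw [if_pos he] at s1 s2 s3
          show if Even x then _ else _
          rw [if_pos he]
          exact hcb.2.1 _ _ _ _ _ _ s1 s2 s3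
        · rw [if_neg he] at s1 s2 s3
          show if Even x then _ else _
          rw [if_neg he]
          exact hcg.2.1 _ _ _ _ _ _ s1 s2 s3
      rw [hg10, hg20, hg30, hg1n, hg2n, hg3n, hJ2 c c] at key
      rw [Emid j hj]
      exact key
end

section
/- For all a, e ∈ M: if a α e and (a, e) ∈ β ∘ γ, then (a, e) ∈ (αβ) ∘ (αγ) ∘ (αβ) ∘ (αγ). Equivalently, α(β∘γ) ⊆ αβ∘αγ∘αβ∘αγ. (Jónsson's characterizing congruence identity for 4-distributivity, the case n = 2 of Lemma 3.1.) -/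
theorem stmt_12
    {M : Type*} [Nonempty M]
    (t1 t2 t3 : M → M → M → M) (α β γ : M → M → Prop)
    (hJ1 : ∀ x y : M, t1 x y x = x)
    (hJ2 : ∀ x y : M, t2 x y x = x)
    (hJ3 : ∀ x y : M, t3 x y x = x)
    (hJ4 : ∀ x z : M, t1 x x z = x)
    (hJ5 : ∀ x z : M, t1 x z z = t2 x z z)
    (hJ6 : ∀ x z : M, t2 x x z = t3 x x z)
    (hJ7 : ∀ x z : M, t3 x z z = z)
    (hα : Equivalence α) (hβ : Equivalence β) (hγ : Equivalence γ)
    (hcong : ∀ θ ∈ ({α, β, γ} : Set (M → M → Prop)),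
      Compat θ t1 ∧ Compat θ t2 ∧ Compat θ t3)
    (a e : M) (hae : α a e) (h : ∃ b, β a b ∧ γ b e) :
    AltRel (fun x y => α x y ∧ β x y) (fun x y => α x y ∧ γ x y) 4 a e := by
  obtain ⟨b, hab, hbe⟩ := h
  obtain ⟨hα1, hα2, hα3⟩ := hcong α (by simp)
  obtain ⟨hβ1, hβ2, hβ3⟩ := hcong β (by simp [Set.mem_insert_iff])
  obtain ⟨hγ1, hγ2, hγ3⟩ := hcong γ (by simp [Set.mem_insert_iff])
  -- α-relations: each tᵢ a b e is α-related to a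
  have hA1 : α (t1 a b e) a := by
    have := hα1 a a b b e a (hα.refl a) (hα.refl b) (hα.symm hae)
    rwa [hJ1] at this
  have hA2 : α (t2 a b e) a := by
    have := hα2 a a b b e a (hα.refl a) (hα.refl b) (hα.symm hae)
    rwa [hJ2] at this
  have hA3 : α (t3 a b e) a := by
    have := hα3 a a b b e a (hα.refl a) (hα.refl b) (hα.symm hae)
    rwa [hJ3] at this
  refine ⟨t1 a b e, ⟨hα.symm hA1, ?_⟩, t2 a b e,
    ⟨hα.trans hA1 (hα.symm hA2), ?_⟩, t3 a b e,
    ⟨hα.trans hA2 (hα.symm hA3), ?_⟩, e, ⟨hα.trans hA3 hae, ?_⟩, rfl⟩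
  · -- β a (t1 a b e)
    have := hβ1 a a a b e e (hβ.refl a) hab (hβ.refl e)
    rwa [hJ4] at this
  · -- γ (t1 a b e) (t2 a b e)
    have h1 := hγ1 a a b e e e (hγ.refl a) hbe (hγ.refl e)
    have h2 := hγ2 a a e b e e (hγ.refl a) (hγ.symm hbe) (hγ.refl e)
    rw [hJ5] at h1
    exact hγ.trans h1 h2
  · -- β (t2 a b e) (t3 a b e)
    have h1 := hβ2 a a b a e e (hβ.refl a) (hβ.symm hab) (hβ.refl e)
    have h2 := hβ3 a a a b e e (hβ.refl a) hab (hβ.refl e)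
    rw [hJ6] at h1
    exact hβ.trans h1 h2
  · -- γ (t3 a b e) e
    have := hγ3 a a b e e e (hγ.refl a) hbe (hγ.refl e)
    rwa [hJ7] at this
end

section
/- For all a, e ∈ M: if a α e and (a, e) ∈ β ∘ γ, then (a, e) ∈ (αβ) ∘ (α ∩ (γ∘β)) ∘ (αγ). Equivalently, α(β∘γ) ⊆ αβ ∘ α(γ∘β) ∘ αγ. (The congruence identity characterizing defective 4-Jónsson varieties, Maltsev-condition-to-identity direction, stated for a single algebra.) -/
theorem stmt_13
    {M : Type*} [Nonempty M]
    (t1 t2 t3 : M → M → M → M) (α β γ : M → M → Prop)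
    (hJ1 : ∀ x y : M, t1 x y x = x)
    (hJ3 : ∀ x y : M, t3 x y x = x)
    (hJ4 : ∀ x z : M, t1 x x z = x)
    (hJ5 : ∀ x z : M, t1 x z z = t2 x z z)
    (hJ6 : ∀ x z : M, t2 x x z = t3 x x z)
    (hJ7 : ∀ x z : M, t3 x z z = z)
    (hα : Equivalence α) (hβ : Equivalence β) (hγ : Equivalence γ)
    (hcong : ∀ θ ∈ ({α, β, γ} : Set (M → M → Prop)),
      Compat θ t1 ∧ Compat θ t2 ∧ Compat θ t3)
    (a e : M) (hae : α a e) (h : ∃ b, β a b ∧ γ b e) :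
    ∃ p q : M,
      (α a p ∧ β a p) ∧ (α p q ∧ ∃ r, γ p r ∧ β r q) ∧ (α q e ∧ γ q e) := by
  obtain ⟨b, hab, hbe⟩ := h
  obtain ⟨hα1, hα2, hα3⟩ := hcong α (by simp)
  obtain ⟨hβ1, hβ2, hβ3⟩ := hcong β (by simp [Set.mem_insert_iff])
  obtain ⟨hγ1, hγ2, hγ3⟩ := hcong γ (by simp [Set.mem_insert_iff])
  refine ⟨t1 a b e, t3 a b e, ⟨?_, ?_⟩, ⟨?_, t2 a b e, ?_, ?_⟩, ?_, ?_⟩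
  · -- α a (t1 a b e)
    have := hα1 a a b b a e (hα.refl a) (hα.refl b) hae
    rwa [hJ1] at this
  · -- β a (t1 a b e)
    have := hβ1 a a a b e e (hβ.refl a) hab (hβ.refl e)
    rwa [hJ4] at this
  · -- α (t1 a b e) (t3 a b e)
    have h1 := hα1 a a b b e a (hα.refl a) (hα.refl b) (hα.symm hae)
    rw [hJ1] at h1
    have h2 := hα3 a e b b e e hae (hα.refl b) (hα.refl e)
    rw [hJ3] at h2
    exact hα.trans h1 (hα.trans hae (hα.symm h2))
  · -- γ (t1 a b e) (t2 a b e)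
    have h1 := hγ1 a a b e e e (hγ.refl a) hbe (hγ.refl e)
    rw [hJ5] at h1
    have h2 := hγ2 a a e b e e (hγ.refl a) (hγ.symm hbe) (hγ.refl e)
    exact hγ.trans h1 h2
  · -- β (t2 a b e) (t3 a b e)
    have h1 := hβ2 a a b a e e (hβ.refl a) (hβ.symm hab) (hβ.refl e)
    rw [hJ6] at h1
    have h2 := hβ3 a a a b e e (hβ.refl a) hab (hβ.refl e)
    exact hβ.trans h1 h2
  · -- α (t3 a b e) e
    have := hα3 a e b b e e hae (hα.refl b) (hα.refl e)
    rwa [hJ3] at this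
  · -- γ (t3 a b e) e
    have := hγ3 a a b e e e (hγ.refl a) hbe (hγ.refl e)
    rwa [hJ7] at this
end

section
/- Let a, b, c, d, e ∈ M satisfy a α e, a β b, b γ c, c β d and d γ e, and set F = t2(t2(a,d,e), t2(a,c,e), t2(a,b,e)). Then (a, F) ∈ (αβ) ∘ (αγ) ∘ (αβ) ∘ (αγ) and, symmetrically, (F, e) ∈ (αβ) ∘ (αγ) ∘ (αβ) ∘ (αγ). (The key computation in the proof of Theorem 2.2.) -/
theorem stmt_14
    {M : Type*} [Nonempty M]
    (t1 t2 t3 : M → M → M → M) (α β γ : M → M → Prop)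
    (hJ1 : ∀ x y : M, t1 x y x = x)
    (hJ2 : ∀ x y : M, t2 x y x = x)
    (hJ3 : ∀ x y : M, t3 x y x = x)
    (hJ4 : ∀ x z : M, t1 x x z = x)
    (hJ5 : ∀ x z : M, t1 x z z = t2 x z z)
    (hJ6 : ∀ x z : M, t2 x x z = t3 x x z)
    (hJ7 : ∀ x z : M, t3 x z z = z)
    (hα : Equivalence α) (hβ : Equivalence β) (hγ : Equivalence γ)
    (hcong : ∀ θ ∈ ({α, β, γ} : Set (M → M → Prop)),
      Compat θ t1 ∧ Compat θ t2 ∧ Compat θ t3)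
    (a b c d e : M) (hae : α a e)
    (hab : β a b) (hbc : γ b c) (hcd : β c d) (hde : γ d e) :
    AltRel (fun x y => α x y ∧ β x y) (fun x y => α x y ∧ γ x y) 4 a
        (t2 (t2 a d e) (t2 a c e) (t2 a b e)) ∧
      AltRel (fun x y => α x y ∧ β x y) (fun x y => α x y ∧ γ x y) 4
        (t2 (t2 a d e) (t2 a c e) (t2 a b e)) e := by
  obtain ⟨hCα1, hCα2, hCα3⟩ := hcong α (by simp)
  obtain ⟨hCβ1, hCβ2, hCβ3⟩ := hcong β (by simp)
  obtain ⟨hCγ1, hCγ2, hCγ3⟩ := hcong γ (by simp)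
  have hea : α e a := hα.symm hae
  have hba : β b a := hβ.symm hab
  have hcb : γ c b := hγ.symm hbc
  have hdc : β d c := hβ.symm hcd
  have hed : γ e d := hγ.symm hde
  -- the chain elements
  -- u1 = t1 (t1 a b e) (t2 a b b) (t3 a a e)
  -- u2 = t1 (t1 a c e) (t2 a c c) (t3 a a e)
  -- u3 = t1 (t1 a d e) (t2 a c d) (t2 a b e)
  -- F  = t2 (t2 a d e) (t2 a c e) (t2 a b e)
  -- w1 = t3 (t2 a d e) (t2 b d e) (t3 a b e)
  -- w2 = t3 (t1 a d e) (t2 c d d) (t3 a c e)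
  -- w3 = t3 (t1 a c e) d (t3 a d e)
  -- α-facts: every chain element is α-related to a
  have hu1a : α (t1 (t1 a b e) (t2 a b b) (t3 a a e)) a := by
    have h : α (t1 (t1 a b e) (t2 a b b) (t3 a a e))
        (t1 (t1 a b a) (t2 a b b) (t3 a a a)) :=
      hCα1 _ _ _ _ _ _ (hCα1 _ _ _ _ _ _ (hα.refl a) (hα.refl b) hea)
        (hα.refl _) (hCα3 _ _ _ _ _ _ (hα.refl a) (hα.refl a) hea)
    rwa [hJ1 a b, hJ3 a a, hJ1 a (t2 a b b)] at h
  have hu2a : α (t1 (t1 a c e) (t2 a c c) (t3 a a e)) a := by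
    have h : α (t1 (t1 a c e) (t2 a c c) (t3 a a e))
        (t1 (t1 a c a) (t2 a c c) (t3 a a a)) :=
      hCα1 _ _ _ _ _ _ (hCα1 _ _ _ _ _ _ (hα.refl a) (hα.refl c) hea)
        (hα.refl _) (hCα3 _ _ _ _ _ _ (hα.refl a) (hα.refl a) hea)
    rwa [hJ1 a c, hJ3 a a, hJ1 a (t2 a c c)] at h
  have hu3a : α (t1 (t1 a d e) (t2 a c d) (t2 a b e)) a := by
    have h : α (t1 (t1 a d e) (t2 a c d) (t2 a b e))
        (t1 (t1 a d a) (t2 a c d) (t2 a b a)) :=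
      hCα1 _ _ _ _ _ _ (hCα1 _ _ _ _ _ _ (hα.refl a) (hα.refl d) hea)
        (hα.refl _) (hCα2 _ _ _ _ _ _ (hα.refl a) (hα.refl b) hea)
    rwa [hJ1 a d, hJ2 a b, hJ1 a (t2 a c d)] at h
  have hFa : α (t2 (t2 a d e) (t2 a c e) (t2 a b e)) a := by
    have h : α (t2 (t2 a d e) (t2 a c e) (t2 a b e))
        (t2 (t2 a d a) (t2 a c a) (t2 a b a)) :=
      hCα2 _ _ _ _ _ _ (hCα2 _ _ _ _ _ _ (hα.refl a) (hα.refl d) hea)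
        (hCα2 _ _ _ _ _ _ (hα.refl a) (hα.refl c) hea)
        (hCα2 _ _ _ _ _ _ (hα.refl a) (hα.refl b) hea)
    rwa [hJ2 a d, hJ2 a c, hJ2 a b, hJ2 a a] at h
  have hw1a : α (t3 (t2 a d e) (t2 b d e) (t3 a b e)) a := by
    have h : α (t3 (t2 a d e) (t2 b d e) (t3 a b e))
        (t3 (t2 a d a) (t2 b d a) (t3 a b a)) :=
      hCα3 _ _ _ _ _ _ (hCα2 _ _ _ _ _ _ (hα.refl a) (hα.refl d) hea)
        (hCα2 _ _ _ _ _ _ (hα.refl b) (hα.refl d) hea)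
        (hCα3 _ _ _ _ _ _ (hα.refl a) (hα.refl b) hea)
    rwa [hJ2 a d, hJ3 a b, hJ3 a (t2 b d a)] at h
  have hw2a : α (t3 (t1 a d e) (t2 c d d) (t3 a c e)) a := by
    have h : α (t3 (t1 a d e) (t2 c d d) (t3 a c e))
        (t3 (t1 a d a) (t2 c d d) (t3 a c a)) :=
      hCα3 _ _ _ _ _ _ (hCα1 _ _ _ _ _ _ (hα.refl a) (hα.refl d) hea)
        (hα.refl _) (hCα3 _ _ _ _ _ _ (hα.refl a) (hα.refl c) hea)
    rwa [hJ1 a d, hJ3 a c, hJ3 a (t2 c d d)] at h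
  have hw3a : α (t3 (t1 a c e) d (t3 a d e)) a := by
    have h : α (t3 (t1 a c e) d (t3 a d e))
        (t3 (t1 a c a) d (t3 a d a)) :=
      hCα3 _ _ _ _ _ _ (hCα1 _ _ _ _ _ _ (hα.refl a) (hα.refl c) hea)
        (hα.refl d) (hCα3 _ _ _ _ _ _ (hα.refl a) (hα.refl d) hea)
    rwa [hJ1 a c, hJ3 a d, hJ3 a d] at h
  -- the β/γ steps
  have sβ1 : β a (t1 (t1 a b e) (t2 a b b) (t3 a a e)) := by
    have h : β (t1 (t1 a a e) (t2 a a a) (t3 a a e))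
        (t1 (t1 a b e) (t2 a b b) (t3 a a e)) :=
      hCβ1 _ _ _ _ _ _ (hCβ1 _ _ _ _ _ _ (hβ.refl a) hab (hβ.refl e))
        (hCβ2 _ _ _ _ _ _ (hβ.refl a) hab hab) (hβ.refl _)
    rwa [hJ4 a e, hJ2 a a, hJ4 a (t3 a a e)] at h
  have sγ2 : γ (t1 (t1 a b e) (t2 a b b) (t3 a a e))
      (t1 (t1 a c e) (t2 a c c) (t3 a a e)) :=
    hCγ1 _ _ _ _ _ _ (hCγ1 _ _ _ _ _ _ (hγ.refl a) hbc (hγ.refl e))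
      (hCγ2 _ _ _ _ _ _ (hγ.refl a) hbc hbc) (hγ.refl _)
  have sβ3 : β (t1 (t1 a c e) (t2 a c c) (t3 a a e))
      (t1 (t1 a d e) (t2 a c d) (t2 a b e)) := by
    have h : β (t1 (t1 a c e) (t2 a c c) (t2 a a e))
        (t1 (t1 a d e) (t2 a c d) (t2 a b e)) :=
      hCβ1 _ _ _ _ _ _ (hCβ1 _ _ _ _ _ _ (hβ.refl a) hcd (hβ.refl e))
        (hCβ2 _ _ _ _ _ _ (hβ.refl a) (hβ.refl c) hcd)
        (hCβ2 _ _ _ _ _ _ (hβ.refl a) hab (hβ.refl e))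
    rwa [hJ6 a e] at h
  have sγ4 : γ (t1 (t1 a d e) (t2 a c d) (t2 a b e))
      (t2 (t2 a d e) (t2 a c e) (t2 a b e)) := by
    have h1 : γ (t1 (t1 a d e) (t2 a c d) (t2 a b e))
        (t1 (t1 a e e) (t2 a b e) (t2 a b e)) :=
      hCγ1 _ _ _ _ _ _ (hCγ1 _ _ _ _ _ _ (hγ.refl a) hde (hγ.refl e))
        (hCγ2 _ _ _ _ _ _ (hγ.refl a) hcb hde)
        (hCγ2 _ _ _ _ _ _ (hγ.refl a) (hγ.refl b) (hγ.refl e))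
    have h2 : t1 (t1 a e e) (t2 a b e) (t2 a b e)
        = t2 (t2 a e e) (t2 a b e) (t2 a b e) := by
      rw [hJ5 a e, hJ5 (t2 a e e) (t2 a b e)]
    have h3 : γ (t2 (t2 a e e) (t2 a b e) (t2 a b e))
        (t2 (t2 a d e) (t2 a c e) (t2 a b e)) :=
      hCγ2 _ _ _ _ _ _ (hCγ2 _ _ _ _ _ _ (hγ.refl a) hed (hγ.refl e))
        (hCγ2 _ _ _ _ _ _ (hγ.refl a) hbc (hγ.refl e))
        (hCγ2 _ _ _ _ _ _ (hγ.refl a) (hγ.refl b) (hγ.refl e))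
    exact hγ.trans (h2 ▸ h1) h3
  have sβ5 : β (t2 (t2 a d e) (t2 a c e) (t2 a b e))
      (t3 (t2 a d e) (t2 b d e) (t3 a b e)) := by
    have h1 : β (t2 (t2 a d e) (t2 a c e) (t2 a b e))
        (t2 (t2 a d e) (t2 a d e) (t2 a a e)) :=
      hCβ2 _ _ _ _ _ _ (hβ.refl _)
        (hCβ2 _ _ _ _ _ _ (hβ.refl a) hcd (hβ.refl e))
        (hCβ2 _ _ _ _ _ _ (hβ.refl a) hba (hβ.refl e))
    have h2 : t2 (t2 a d e) (t2 a d e) (t2 a a e)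
        = t3 (t2 a d e) (t2 a d e) (t3 a a e) := by
      rw [hJ6 (t2 a d e) (t2 a a e), hJ6 a e]
    have h3 : β (t3 (t2 a d e) (t2 a d e) (t3 a a e))
        (t3 (t2 a d e) (t2 b d e) (t3 a b e)) :=
      hCβ3 _ _ _ _ _ _ (hβ.refl _)
        (hCβ2 _ _ _ _ _ _ hab (hβ.refl d) (hβ.refl e))
        (hCβ3 _ _ _ _ _ _ (hβ.refl a) hab (hβ.refl e))
    exact hβ.trans (h2 ▸ h1) h3
  have sγ6 : γ (t3 (t2 a d e) (t2 b d e) (t3 a b e))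
      (t3 (t1 a d e) (t2 c d d) (t3 a c e)) := by
    have h1 : γ (t3 (t2 a d e) (t2 b d e) (t3 a b e))
        (t3 (t2 a d d) (t2 c d d) (t3 a c e)) :=
      hCγ3 _ _ _ _ _ _ (hCγ2 _ _ _ _ _ _ (hγ.refl a) (hγ.refl d) hed)
        (hCγ2 _ _ _ _ _ _ hbc (hγ.refl d) hed)
        (hCγ3 _ _ _ _ _ _ (hγ.refl a) hbc (hγ.refl e))
    have h2 : t3 (t2 a d d) (t2 c d d) (t3 a c e)
        = t3 (t1 a d d) (t2 c d d) (t3 a c e) := by rw [hJ5 a d]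
    have h3 : γ (t3 (t1 a d d) (t2 c d d) (t3 a c e))
        (t3 (t1 a d e) (t2 c d d) (t3 a c e)) :=
      hCγ3 _ _ _ _ _ _ (hCγ1 _ _ _ _ _ _ (hγ.refl a) (hγ.refl d) hde)
        (hγ.refl _) (hγ.refl _)
    exact hγ.trans (h2 ▸ h1) h3
  have sβ7 : β (t3 (t1 a d e) (t2 c d d) (t3 a c e))
      (t3 (t1 a c e) d (t3 a d e)) := by
    have h : β (t3 (t1 a d e) (t2 c d d) (t3 a c e))
        (t3 (t1 a c e) (t2 d c d) (t3 a d e)) :=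
      hCβ3 _ _ _ _ _ _ (hCβ1 _ _ _ _ _ _ (hβ.refl a) hdc (hβ.refl e))
        (hCβ2 _ _ _ _ _ _ hcd hdc (hβ.refl d))
        (hCβ3 _ _ _ _ _ _ (hβ.refl a) hcd (hβ.refl e))
    rwa [hJ2 d c] at h
  have sγ8 : γ (t3 (t1 a c e) d (t3 a d e)) e := by
    have h : γ (t3 (t1 a c e) d (t3 a d e))
        (t3 (t1 a b e) e (t3 a e e)) :=
      hCγ3 _ _ _ _ _ _ (hCγ1 _ _ _ _ _ _ (hγ.refl a) hcb (hγ.refl e))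
        hde (hCγ3 _ _ _ _ _ _ (hγ.refl a) hde (hγ.refl e))
    rwa [hJ7 a e, hJ7 (t1 a b e) e] at h
  refine ⟨⟨_, ⟨hα.symm hu1a, sβ1⟩, _, ⟨hα.trans hu1a (hα.symm hu2a), sγ2⟩,
      _, ⟨hα.trans hu2a (hα.symm hu3a), sβ3⟩,
      _, ⟨hα.trans hu3a (hα.symm hFa), sγ4⟩, rfl⟩,
    ⟨_, ⟨hα.trans hFa (hα.symm hw1a), sβ5⟩,
      _, ⟨hα.trans hw1a (hα.symm hw2a), sγ6⟩,
      _, ⟨hα.trans hw2a (hα.symm hw3a), sβ7⟩,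
      _, ⟨hα.trans hw3a hae, sγ8⟩, rfl⟩⟩
end
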